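/- arXiv:1502.03849 — 7 statements merged into one kernel-verified Lean document; each statement's English description precedes it below -/
import Mathlib

section
/- Let k ≥ 2 and n = k², and let M be a randomized mechanism mapping reported profiles of unit-sum valuations to probability distributions over matchings. Suppose M has safe strategies: for every agent i, every unit-sum valuation u_i, and every enumeration a_1, …, a_n of the items with u_i(a_1) ≥ u_i(a_2) ≥ ⋯ ≥ u_i(a_n), there exists a report s_i such that for every profile s_{−i} of the other agents' reports and every ℓ ∈ {1,…,n}, ∑_{t=1}^{ℓ} p_{i,a_t}(s_i, s_{−i}) ≥ ℓ/n. Then there exists a unit-sum valuation profile w with SW_OPT(w) ≥ √n such that every pure Nash equilibrium s of M at w satisfies SW_M(w,s) ≤ 2. In particular, the pure Price of Stability of every such mechanism is at least √n/2 = Ω(√n). -/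
/-- A unit-sum valuation over `n` items. -/
def UnitSum {n : ℕ} (v : Fin n → ℝ) : Prop :=
  (∀ j, 0 ≤ v j) ∧ ∑ j, v j = 1

/-- A unit-range valuation over `n` items. -/
def UnitRange {n : ℕ} (v : Fin n → ℝ) : Prop :=
  (∀ j, 0 ≤ v j ∧ v j ≤ 1) ∧ (∃ j, v j = 1) ∧ (∃ j, v j = 0)

/-- The optimal social welfare: the maximum over matchings (permutations of the
items) of the total utility. -/
noncomputable def SWopt {n : ℕ} (u : Fin n → Fin n → ℝ) : ℝ :=
  Finset.univ.sup' ⟨Equiv.refl (Fin n), Finset.mem_univ _⟩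
    (fun μ : Equiv.Perm (Fin n) => ∑ i, u i (μ i))

/-- `s` is a pure Nash equilibrium of the (cardinal, randomized) mechanism with
allocation probabilities `p` at true valuation profile `u`: every report is a
unit-sum valuation and no agent can strictly increase her expected utility by
unilaterally changing her report to another unit-sum valuation. -/
def CardinalNash {n : ℕ} (p : (Fin n → Fin n → ℝ) → Fin n → Fin n → ℝ)
    (u s : Fin n → Fin n → ℝ) : Prop :=
  (∀ i, UnitSum (s i)) ∧
    ∀ (i : Fin n) (s' : Fin n → ℝ), UnitSum s' →
      ∑ j, p (Function.update s i s') i j * u i j ≤ ∑ j, p s i j * u i j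

/-- Price of Stability lower bound for mechanisms with safe strategies: let
`n = k²` with `k ≥ 2` and let the mechanism (allocation probabilities `p`,
forming a distribution over matchings on unit-sum reports) have safe strategies:
for every agent `i`, every unit-sum valuation `v` and every enumeration `a` of
the items in weakly decreasing order of value, there is a report `si` such that
against every profile of unit-sum reports of the others, for every
`ℓ ∈ {1,…,n}`, the probability of getting one of the `ℓ` best items is at least
`ℓ/n`. Then there is a unit-sum profile `w` with `SW_OPT(w) ≥ √n` at which every
pure Nash equilibrium has social welfare at most `2`; hence the pure Price of
Stability is `Ω(√n)`. -/
theorem safe_strategy_pos_lower (n k : ℕ) (hk : 2 ≤ k) (hn : n = k ^ 2)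
    (p : (Fin n → Fin n → ℝ) → Fin n → Fin n → ℝ)
    (hmatch : ∀ s : Fin n → Fin n → ℝ, (∀ i, UnitSum (s i)) →
      (∀ i j, 0 ≤ p s i j) ∧ (∀ i, ∑ j, p s i j = 1) ∧ (∀ j, ∑ i, p s i j = 1))
    (hsafe : ∀ (i : Fin n) (v : Fin n → ℝ), UnitSum v →
      ∀ a : Fin n ≃ Fin n, (∀ t t' : Fin n, t ≤ t' → v (a t') ≤ v (a t)) →
        ∃ si : Fin n → ℝ, UnitSum si ∧
          ∀ s : Fin n → Fin n → ℝ, (∀ m, UnitSum (s m)) →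
            ∀ ℓ : ℕ, 1 ≤ ℓ → ℓ ≤ n →
              (ℓ : ℝ) / n ≤
                ∑ t : Fin n,
                  if (t : ℕ) < ℓ then p (Function.update s i si) i (a t) else 0) :
    ∃ w : Fin n → Fin n → ℝ, (∀ i, UnitSum (w i)) ∧ Real.sqrt n ≤ SWopt w ∧
      ∀ s, CardinalNash p w s → ∑ i, ∑ j, p s i j * w i j ≤ 2 := by
  classical
  have hk0 : 0 < k := by omega
  have hn0 : 0 < n := by subst hn; positivity
  have hkn : k ≤ n := by subst hn; nlinarith
  have hkR : (0:ℝ) < (k:ℝ) := by exact_mod_cast hk0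
  have hnR : (0:ℝ) < (n:ℝ) := by exact_mod_cast hn0
  have hnk : (n:ℝ) = (k:ℝ)^2 := by rw [hn]; push_cast; ring
  -- key counting lemma
  have sumA : ∀ c : ℝ, ∑ j : Fin n, (if (j:ℕ) < k then c else 0) = k * c := by
    intro c
    rw [Fin.sum_univ_eq_sum_range (fun j => if j < k then c else 0) n]
    calc ∑ j ∈ Finset.range n, (if j < k then c else 0)
        = ∑ j ∈ Finset.range n, (if j ∈ Finset.range k then c else 0) :=
          Finset.sum_congr rfl fun j _ => by simp [Finset.mem_range]
      _ = ∑ _j ∈ Finset.range n ∩ Finset.range k, c := Finset.sum_ite_mem _ _ _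
      _ = k * c := by
          rw [Finset.inter_eq_right.mpr (Finset.range_subset_range.mpr hkn)]
          simp [mul_comm]
  obtain ⟨w, hwdef⟩ : ∃ w : Fin n → Fin n → ℝ, w = fun (i j : Fin n) =>
      if (i:ℕ) < k then (if j = i then 1 else 0) else (if (j:ℕ) < k then (k:ℝ)⁻¹ else 0) :=
    ⟨_, rfl⟩
  have hw_unit : ∀ i, UnitSum (w i) := by
    intro i
    constructor
    · intro j
      by_cases h : (i:ℕ) < k <;> simp only [hwdef, h, if_true, if_false] <;> positivity
    · by_cases h : (i:ℕ) < k
      · simp [hwdef, h]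
      · simp only [hwdef, h, if_false]
        rw [sumA]
        field_simp
  refine ⟨w, hw_unit, ?_, ?_⟩
  · -- SWopt bound
    have hsq : Real.sqrt n = k := by
      rw [hnk, Real.sqrt_sq hkR.le]
    rw [hsq]
    have h1 : ∑ i, w i ((Equiv.refl (Fin n)) i) ≤ SWopt w :=
      Finset.le_sup' (fun μ : Equiv.Perm (Fin n) => ∑ i, w i (μ i)) (Finset.mem_univ _)
    have h2 : ∑ i, w i ((Equiv.refl (Fin n)) i) = k := by
      have hterm : ∀ i : Fin n, w i ((Equiv.refl (Fin n)) i) = if (i:ℕ) < k then (1:ℝ) else 0 := by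
        intro i
        by_cases h : (i:ℕ) < k <;> simp [hwdef, h]
      rw [Finset.sum_congr rfl fun i _ => hterm i, sumA]
      ring
    linarith
  · -- Nash welfare bound
    rintro s ⟨hs1, hs2⟩
    obtain ⟨hpos, hrow, hcol⟩ := hmatch s hs1
    set q : Fin n → ℝ := fun i => ∑ j : Fin n, if (j:ℕ) < k then p s i j else 0 with hq
    have hq_nonneg : ∀ i, 0 ≤ q i := by
      intro i
      refine Finset.sum_nonneg fun j _ => ?_
      by_cases h : (j:ℕ) < k <;> simp [h, hpos]
    have hqsum : ∑ i, q i = k := by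
      rw [hq]
      rw [Finset.sum_comm]
      have hcolsum : ∀ j : Fin n, (∑ i, if (j:ℕ) < k then p s i j else 0)
          = if (j:ℕ) < k then (1:ℝ) else 0 := by
        intro j
        by_cases h : (j:ℕ) < k <;> simp [h, hcol j]
      rw [Finset.sum_congr rfl fun j _ => hcolsum j, sumA]
      ring
    -- small agents get at least k/n from the top k items at equilibrium
    have hq_small : ∀ m : Fin n, ¬ (m:ℕ) < k → (k:ℝ)/n ≤ q m := by
      intro m hm
      have hwm : w m = fun (j : Fin n) => if (j:ℕ) < k then (k:ℝ)⁻¹ else 0 := by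
        funext j; simp [hwdef, hm]
      have hmono : ∀ t t' : Fin n, t ≤ t' → w m ((Equiv.refl (Fin n)) t') ≤ w m ((Equiv.refl (Fin n)) t) := by
        intro t t' htt'
        rw [hwm]
        simp only [Equiv.refl_apply]
        by_cases h' : (t':ℕ) < k
        · have ht : (t:ℕ) < k := lt_of_le_of_lt htt' h'
          simp [h', ht]
        · simp only [h', if_false]
          by_cases h : (t:ℕ) < k <;> simp [h] <;> positivity
      obtain ⟨si, hsiu, hguar⟩ := hsafe m (w m) (hw_unit m) (Equiv.refl (Fin n)) hmono
      have hg := hguar s hs1 k (by omega) hkn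
      simp only [Equiv.refl_apply] at hg
      have hdev := hs2 m si hsiu
      have hL : ∑ j, p (Function.update s m si) m j * w m j
          = (k:ℝ)⁻¹ * ∑ t : Fin n, (if (t:ℕ) < k then p (Function.update s m si) m t else 0) := by
        rw [hwm, Finset.mul_sum]
        refine Finset.sum_congr rfl fun j _ => ?_
        by_cases h : (j:ℕ) < k <;> simp [h] <;> ring
      have hR : ∑ j, p s m j * w m j = (k:ℝ)⁻¹ * q m := by
        rw [hwm, hq, Finset.mul_sum]
        refine Finset.sum_congr rfl fun j _ => ?_
        by_cases h : (j:ℕ) < k <;> simp [h] <;> ring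
      have hchain : (k:ℝ)⁻¹ * ((k:ℝ)/n) ≤ (k:ℝ)⁻¹ * q m := by
        calc (k:ℝ)⁻¹ * ((k:ℝ)/n)
            ≤ (k:ℝ)⁻¹ * ∑ t : Fin n, (if (t:ℕ) < k then p (Function.update s m si) m t else 0) := by
              apply mul_le_mul_of_nonneg_left hg (by positivity)
          _ = ∑ j, p (Function.update s m si) m j * w m j := hL.symm
          _ ≤ ∑ j, p s m j * w m j := hdev
          _ = (k:ℝ)⁻¹ * q m := hR
      exact le_of_mul_le_mul_left hchain (by positivity)
    have hWterm : ∀ i : Fin n, ∑ j, p s i j * w i j ≤ if (i:ℕ) < k then q i else (k:ℝ)⁻¹ * q i := by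
      intro i
      by_cases h : (i:ℕ) < k
      · simp only [h, if_true]
        have heq : ∑ j, p s i j * w i j = p s i i := by
          simp only [hwdef, h, if_true, mul_ite, mul_one, mul_zero]
          simp
        rw [heq, hq]
        have hrw : p s i i = (if ((i : Fin n):ℕ) < k then p s i i else 0) := by simp [h]
        rw [hrw]
        exact Finset.single_le_sum (f := fun j : Fin n => if (j:ℕ) < k then p s i j else 0)
          (fun j _ => by by_cases hj : (j:ℕ) < k <;> simp [hj, hpos]) (Finset.mem_univ i)
      · simp only [h, if_false]
        have hwm : w i = fun (j : Fin n) => if (j:ℕ) < k then (k:ℝ)⁻¹ else 0 := by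
          funext j; simp [hwdef, h]
        rw [hwm, hq, Finset.mul_sum]
        refine le_of_eq (Finset.sum_congr rfl fun j _ => ?_)
        by_cases hj : (j:ℕ) < k <;> simp [hj] <;> ring
    set C : ℝ := ∑ i : Fin n, if (i:ℕ) < k then q i else 0 with hC
    set D : ℝ := ∑ i : Fin n, if (i:ℕ) < k then 0 else q i with hD
    have hCD : C + D = k := by
      rw [hC, hD, ← Finset.sum_add_distrib, ← hqsum]
      refine Finset.sum_congr rfl fun i _ => ?_
      by_cases h : (i:ℕ) < k <;> simp [h]
    have hC_nonneg : 0 ≤ C := Finset.sum_nonneg fun i _ => by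
      by_cases h : (i:ℕ) < k <;> simp [h, hq_nonneg]
    have hD_lb : (k:ℝ) - 1 ≤ D := by
      have h1 : ∑ i : Fin n, (if (i:ℕ) < k then (0:ℝ) else (k:ℝ)/n) ≤ D := by
        refine Finset.sum_le_sum fun i _ => ?_
        by_cases h : (i:ℕ) < k
        · simp [h]
        · simp only [h, if_false]; exact hq_small i h
      have h2 : ∑ i : Fin n, (if (i:ℕ) < k then (0:ℝ) else (k:ℝ)/n) = (k:ℝ) - 1 := by
        have h3 : ∀ i : Fin n, (if (i:ℕ) < k then (0:ℝ) else (k:ℝ)/n)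
            = (k:ℝ)/n - (if (i:ℕ) < k then (k:ℝ)/n else 0) := by
          intro i; by_cases h : (i:ℕ) < k <;> simp [h]
        rw [Finset.sum_congr rfl fun i _ => h3 i, Finset.sum_sub_distrib, sumA,
          Finset.sum_const, Finset.card_univ, Fintype.card_fin, nsmul_eq_mul]
        rw [hnk]
        field_simp
      linarith
    have hC_le : C ≤ 1 := by linarith
    have hD_le : D ≤ k := by linarith
    calc ∑ i, ∑ j, p s i j * w i j
        ≤ ∑ i : Fin n, (if (i:ℕ) < k then q i else (k:ℝ)⁻¹ * q i) :=
          Finset.sum_le_sum fun i _ => hWterm i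
      _ = C + (k:ℝ)⁻¹ * D := by
          rw [hC, hD, Finset.mul_sum, ← Finset.sum_add_distrib]
          refine Finset.sum_congr rfl fun i _ => ?_
          by_cases h : (i:ℕ) < k <;> simp [h]
      _ ≤ 1 + (k:ℝ)⁻¹ * (k:ℝ) := by
          have hmul : (k:ℝ)⁻¹ * D ≤ (k:ℝ)⁻¹ * k := mul_le_mul_of_nonneg_left hD_le (by positivity)
          linarith
      _ = 2 := by rw [inv_mul_cancel₀ (ne_of_gt hkR)]; norm_num
end

section
/- In the Random Priority mechanism, for every profile s of reported strict orderings, every agent i, and every ℓ ∈ {1,…,n}, the probability that agent i receives one of the first ℓ items of her own reported ordering is at least ℓ/n; that is, ∑_{t=1}^{ℓ} p_{i, s_i(t)}(s) ≥ ℓ/n, where s_i(t) is the t-th item in agent i's reported ordering. In particular, truth-telling is a safe strategy in Random Priority: the resulting allocation probability vector stochastically dominates the uniform vector (1/n, …, 1/n) with respect to the agent's true preferences. -/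
open Classical in
/-- The list of items assigned by serial dictatorship in the first `r` positions:
given reported orderings `s` (bijections from ranks to items, rank `0` most
preferred) and an ordering `π` of the agents (position `r` is served by agent
`π r`), the agent at each position receives her most preferred item among those
not yet assigned. -/
noncomputable def sdList {n : ℕ} (s : Fin n → (Fin n ≃ Fin n)) (π : Equiv.Perm (Fin n)) :
    ℕ → List (Fin n)
  | 0 => []
  | (r + 1) =>
      let prev := sdList s π r
      if h : r < n then
        let i := π ⟨r, h⟩
        let R : Finset (Fin n) := Finset.univ.filter (fun t => s i t ∉ prev)
        let itm : Fin n :=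
          if hR : R.Nonempty then s i (R.min' hR)
          else ⟨0, Nat.lt_of_le_of_lt (Nat.zero_le r) h⟩
        prev ++ [itm]
      else prev

/-- The item assigned to agent `i` by serial dictatorship with agent ordering `π`
and reported orderings `s`. -/
noncomputable def sdAssign {n : ℕ} (s : Fin n → (Fin n ≃ Fin n)) (π : Equiv.Perm (Fin n))
    (i : Fin n) : Fin n :=
  (sdList s π n).getD (π.symm i : ℕ) ⟨0, i.pos⟩

open Classical in
/-- `rpProb s i j` is the probability that agent `i` receives item `j` under the
Random Priority mechanism at report profile `s`: an ordering of the agents is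
drawn uniformly at random and serial dictatorship is run with respect to it. -/
noncomputable def rpProb {n : ℕ} (s : Fin n → (Fin n ≃ Fin n)) (i j : Fin n) : ℝ :=
  (∑ π : Equiv.Perm (Fin n), if sdAssign s π i = j then (1 : ℝ) else 0) / (n.factorial : ℝ)

/-- The expected social welfare of Random Priority at report profile `s` under
true valuation profile `u`. -/
noncomputable def rpSW {n : ℕ} (u : Fin n → Fin n → ℝ) (s : Fin n → (Fin n ≃ Fin n)) : ℝ :=
  ∑ i, ∑ j, rpProb s i j * u i j

/-- `s` is a pure Nash equilibrium of Random Priority at true valuation profile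
`u`: no agent can strictly increase her expected utility by unilaterally
reporting a different ordering. -/
def RPNash {n : ℕ} (u : Fin n → Fin n → ℝ) (s : Fin n → (Fin n ≃ Fin n)) : Prop :=
  ∀ (i : Fin n) (s' : Fin n ≃ Fin n),
    ∑ j, rpProb (Function.update s i s') i j * u i j ≤ ∑ j, rpProb s i j * u i j

/-!
Whoever is served at position `r` of the priority order finds at most `r` items taken, so by
pigeonhole one of her top `r + 1` reported items is still free: she receives an item of rank at
most `r`. A uniformly random order places agent `i` at each position with probability `1 / n`,
hence among the first `ℓ` positions with probability `ℓ / n`.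
-/

open Finset Equiv
open scoped Nat

section PermCount

variable {α : Type*} [Fintype α] [DecidableEq α]

theorem card_filter_perm_symm_apply_eq_eq (a b c : α) :
    #{π : Perm α | π.symm a = b} = #{π : Perm α | π.symm a = c} :=
  card_equiv (Equiv.mulRight (swap b c)) fun π => by
    simp [Perm.mul_def, swap_apply_eq_iff]

theorem card_filter_perm_symm_apply_mem (a : α) (S : Finset α) :
    #{π : Perm α | π.symm a ∈ S} = #S * #{π : Perm α | π.symm a = a} := by
  rw [card_eq_sum_card_fiberwise (s := {π : Perm α | π.symm a ∈ S}) (t := S)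
    (f := fun π => π.symm a) fun π hπ => (mem_filter.mp hπ).2, ← smul_eq_mul, ← sum_const]
  refine sum_congr rfl fun b hb => ?_
  rw [filter_filter, ← card_filter_perm_symm_apply_eq_eq a b a]
  congr 1
  ext π
  simp +contextual [hb]

theorem card_mul_card_filter_perm_symm_apply_mem (a : α) (S : Finset α) :
    Fintype.card α * #{π : Perm α | π.symm a ∈ S} = #S * (Fintype.card α)! := by
  have hall := card_filter_perm_symm_apply_mem a univ
  simp only [mem_univ, filter_true, card_univ, Fintype.card_perm] at hall
  rw [card_filter_perm_symm_apply_mem, hall]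
  ring

end PermCount

theorem Fin.exists_le_apply_notMem_of_length_le {n : ℕ} {β : Type*} {f : Fin n → β}
    (hf : Function.Injective f) (l : List β) (r : Fin n) (hl : l.length ≤ r) :
    ∃ t ≤ r, f t ∉ l := by
  classical
  by_contra! hall
  have hsub : (Iic r).image f ⊆ l.toFinset := by
    simpa [image_subset_iff] using hall
  have : (r : ℕ) + 1 ≤ l.length :=
    calc (r : ℕ) + 1 = #((Iic r).image f) := by rw [card_image_of_injective _ hf, Fin.card_Iic]
      _ ≤ #l.toFinset := card_le_card hsub
      _ ≤ l.length := List.toFinset_card_le l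
  omega

section SerialDictatorship

variable {n : ℕ} (s : Fin n → (Fin n ≃ Fin n)) (π : Perm (Fin n))

theorem sdList_length {r : ℕ} (hr : r ≤ n) : (sdList s π r).length = r := by
  induction r with
  | zero => simp [sdList]
  | succ r ih => simp [sdList, Nat.lt_of_succ_le hr, ih (Nat.le_of_succ_le hr)]

theorem sdList_prefix_of_le {r m : ℕ} (h : r ≤ m) : sdList s π r <+: sdList s π m := by
  induction m, h using Nat.le_induction with
  | base => exact List.prefix_refl _
  | succ m _ ih =>
    refine ih.trans ?_
    rw [sdList]
    split
    · exact List.prefix_append _ _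
    · exact List.prefix_refl _

theorem sdList_succ {r : ℕ} (h : r < n) :
    ∃ t : Fin n, (t : ℕ) ≤ r ∧ sdList s π (r + 1) = sdList s π r ++ [s (π ⟨r, h⟩) t] := by
  obtain ⟨t₀, ht₀r, ht₀⟩ := Fin.exists_le_apply_notMem_of_length_le (s (π ⟨r, h⟩)).injective
    (sdList s π r) ⟨r, h⟩ (sdList_length s π h.le).le
  rw [sdList, dif_pos h]
  dsimp only
  have hR : ({t | s (π ⟨r, h⟩) t ∉ sdList s π r} : Finset (Fin n)).Nonempty :=
    ⟨t₀, by simpa using ht₀⟩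
  rw [dif_pos hR]
  exact ⟨_, (min'_le _ _ (by simpa using ht₀)).trans ht₀r, rfl⟩

theorem sdAssign_rank_le (i : Fin n) :
    ((s i).symm (sdAssign s π i) : ℕ) ≤ π.symm i := by
  obtain ⟨t, htr, hsucc⟩ := sdList_succ s π (π.symm i).isLt
  have hprefix := sdList_prefix_of_le s π (π.symm i).isLt
  have hlen := sdList_length s π (π.symm i).isLt
  have hassign : sdAssign s π i = s i t := by
    rw [sdAssign, List.getD_eq_getElem _ _ (by simp [sdList_length s π le_rfl]),
      ← hprefix.getElem (by omega)]
    simp [hsucc, List.getElem_append_right, sdList_length s π (π.symm i).isLt.le]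
  simpa [hassign] using htr

end SerialDictatorship

theorem sum_ite_rpProb_eq_card_div {n : ℕ} (s : Fin n → (Fin n ≃ Fin n)) (i : Fin n)
    (P : Fin n → Prop) [DecidablePred P] :
    ∑ t, (if P t then rpProb s i (s i t) else 0) =
      (#{π : Perm (Fin n) | P ((s i).symm (sdAssign s π i))} : ℝ) / n ! := by
  have hpoint (t : Fin n) : (if P t then rpProb s i (s i t) else 0) =
      (∑ π : Perm (Fin n), if P t ∧ sdAssign s π i = s i t then (1 : ℝ) else 0) / n ! := by
    unfold rpProb
    split_ifs with h <;> simp [h]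
  have hinner (π : Perm (Fin n)) :
      ∑ t, (if P t ∧ sdAssign s π i = s i t then (1 : ℝ) else 0) =
        if P ((s i).symm (sdAssign s π i)) then 1 else 0 := by
    rw [Fintype.sum_eq_single ((s i).symm (sdAssign s π i))]
    · simp
    · intro t ht
      simp [← (s i).symm_apply_eq, Ne.symm ht]
  rw [sum_congr rfl fun t _ => hpoint t, ← sum_div, sum_comm, sum_congr rfl fun π _ => hinner π,
    sum_boole]

theorem rp_safe_strategy_general (n : ℕ) (s : Fin n → (Fin n ≃ Fin n)) (i : Fin n)
    (ℓ : ℕ) (h2 : ℓ ≤ n) :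
    (ℓ : ℝ) / n ≤ ∑ t : Fin n, if (t : ℕ) < ℓ then rpProb s i (s i t) else 0 := by
  have hcount := card_mul_card_filter_perm_symm_apply_mem i {r : Fin n | (r : ℕ) < ℓ}
  rw [Fintype.card_fin, Fin.card_filter_val_lt, min_eq_right h2] at hcount
  rw [sum_ite_rpProb_eq_card_div s i fun t : Fin n => (t : ℕ) < ℓ]
  calc (ℓ : ℝ) / n = (#{π : Perm (Fin n) | ((π.symm i : Fin n) : ℕ) < ℓ} : ℝ) / n ! := by
        rw [div_eq_div_iff (by exact_mod_cast i.pos.ne') (by positivity)]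
        exact_mod_cast (by simpa [mul_comm] using hcount.symm)
    _ ≤ _ := by
        gcongr with π
        exact sdAssign_rank_le s π i

/-- Random Priority has a safe strategy: for every report profile `s`, every
agent `i` and every `ℓ ∈ {1,…,n}`, the probability that agent `i` receives one
of the first `ℓ` items of her own reported ordering is at least `ℓ/n`; in
particular a truthful report yields an allocation that stochastically dominates
the uniform vector `(1/n, …, 1/n)`. -/
theorem rp_safe_strategy (n : ℕ) (s : Fin n → (Fin n ≃ Fin n)) (i : Fin n)
    (ℓ : ℕ) (h1 : 1 ≤ ℓ) (h2 : ℓ ≤ n) :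
    (ℓ : ℝ) / n ≤ ∑ t : Fin n, if (t : ℕ) < ℓ then rpProb s i (s i t) else 0 :=
  rp_safe_strategy_general n s i ℓ h2
end

section
/- There exist a constant c > 0 and N ∈ ℕ such that for every n ≥ N and every deterministic mechanism M mapping reported profiles of unit-range valuations to matchings that admits a pure Nash equilibrium at every true profile of unit-range valuations, there exist a unit-range valuation profile w and a pure Nash equilibrium s of M at w with SW_OPT(w) ≥ c·n·SW_M(w,s); i.e., the pure Price of Anarchy of every such deterministic mechanism is Ω(n) under the unit-range representation. -/
/-- `s` is a pure Nash equilibrium of the deterministic mechanism `M` at true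
valuation profile `u`: every report is a unit-range valuation and no agent can
strictly increase her utility by unilaterally changing her report to another
unit-range valuation. -/
def DetNashUR {n : ℕ} (M : (Fin n → Fin n → ℝ) → Equiv.Perm (Fin n))
    (u s : Fin n → Fin n → ℝ) : Prop :=
  (∀ i, UnitRange (s i)) ∧
    ∀ (i : Fin n) (s' : Fin n → ℝ), UnitRange s' →
      u i (M (Function.update s i s') i) ≤ u i (M s i)

/-!
Let every agent report one strictly decreasing valuation `v` and let `s` be an equilibrium,
with matching `μ = M s`. As `v` ranks items by index, a unilateral deviation can only give
agent `i` an item of index at least `μ i`. So if agent `i` truly wants only the item just below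
`μ i` (the holder of item `0` wants item `0`), no deviation pays and `s` stays an equilibrium.
Its welfare is `1`, while shifting `μ` cyclically down by one item has welfare at least `n - 1`.
-/

open Finset

section

variable {n : ℕ}

lemma exists_unitRange_strictAnti (hn : 2 ≤ n) :
    ∃ v : Fin n → ℝ, UnitRange v ∧ StrictAnti v := by
  obtain ⟨m, rfl⟩ : ∃ m, n = m + 2 := ⟨n - 2, by omega⟩
  have hm : (0 : ℝ) < m + 1 := by positivity
  refine ⟨fun j => ((Fin.rev j : ℕ) : ℝ) / (m + 1),
    ⟨fun j => ⟨by positivity, ?_⟩, ⟨0, ?_⟩, ⟨Fin.last _, by simp⟩⟩,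
    fun a b hab => div_lt_div_of_pos_right (by exact_mod_cast Fin.rev_strictAnti hab) hm⟩
  · rw [div_le_one hm]
    exact_mod_cast Nat.le_of_lt_succ (Fin.rev j).isLt
  · simp [div_self hm.ne']

lemma unitRange_single (hn : 2 ≤ n) (k : Fin n) : UnitRange (Pi.single k 1 : Fin n → ℝ) := by
  have : Nontrivial (Fin n) := Fin.nontrivial_iff_two_le.mpr hn
  obtain ⟨j, hj⟩ := exists_ne k
  refine ⟨fun i => ?_, ⟨k, Pi.single_eq_same k 1⟩, ⟨j, Pi.single_eq_of_ne hj 1⟩⟩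
  rw [Pi.single_apply]
  split_ifs <;> norm_num

lemma DetNashUR.of_le_imp_le {M : (Fin n → Fin n → ℝ) → Equiv.Perm (Fin n)}
    {u w s : Fin n → Fin n → ℝ} (h : DetNashUR M u s)
    (huw : ∀ i j, u i j ≤ u i (M s i) → w i j ≤ w i (M s i)) : DetNashUR M w s :=
  ⟨h.1, fun i s' hs' => huw i _ (h.2 i s' hs')⟩

lemma sum_le_SWopt (u : Fin n → Fin n → ℝ) (σ : Equiv.Perm (Fin n)) :
    ∑ i, u i (σ i) ≤ SWopt u :=
  le_sup' (fun μ : Equiv.Perm (Fin n) => ∑ i, u i (μ i)) (mem_univ σ)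

lemma finRotate_symm_eq_pred [NeZero n] {k : Fin n} (hk : k ≠ 0) :
    (finRotate n).symm k = Order.pred k := by
  refine (CovBy.pred_eq ?_).symm
  rw [Fin.covBy_iff, Nat.covBy_iff_add_one_eq, coe_finRotate_symm_of_ne_zero hk]
  have := Fin.val_ne_zero_iff.mpr hk
  omega

end

section PredOrder

variable {α : Type*} [PartialOrder α] [OrderBot α] [PredOrder α] [DecidableEq α]

lemma single_pred_apply_self (k : α) :
    (Pi.single (Order.pred k) 1 : α → ℝ) k = if k = ⊥ then 1 else 0 := by
  simp only [Pi.single_apply, eq_comm (a := k), Order.pred_eq_iff_isMin,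
    isMin_iff_eq_bot]

lemma single_pred_apply_le_apply_self {k j : α} (hkj : k ≤ j) :
    (Pi.single (Order.pred k) 1 : α → ℝ) j ≤
      (Pi.single (Order.pred k) 1 : α → ℝ) k := by
  rw [single_pred_apply_self, Pi.single_apply]
  by_cases hk : k = ⊥
  · rw [if_pos hk]
    split_ifs <;> norm_num
  · have hpred : Order.pred k < j :=
      (Order.pred_lt_of_not_isMin (isMin_iff_eq_bot.not.mpr hk)).trans_le hkj
    rw [if_neg hk, if_neg hpred.ne']

end PredOrder

noncomputable def predProfile {n : ℕ} (μ : Equiv.Perm (Fin n)) : Fin n → Fin n → ℝ :=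
  fun i => Pi.single (Order.pred (μ i)) 1

section predProfile

variable {n : ℕ} [NeZero n] (μ : Equiv.Perm (Fin n))

lemma sum_predProfile_self : ∑ i, predProfile μ i (μ i) = 1 := by
  refine (Equiv.sum_comp μ fun k => (Pi.single (Order.pred k) 1 : Fin n → ℝ) k).trans ?_
  simp only [single_pred_apply_self, bot_eq_zero, sum_ite_eq', mem_univ, if_true]

lemma natCast_sub_one_le_SWopt_predProfile : (n : ℝ) - 1 ≤ SWopt (predProfile μ) := by
  calc (n : ℝ) - 1 = ∑ k : Fin n, (1 - if k = 0 then 1 else 0) := by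
        simp only [sum_sub_distrib, sum_const, card_univ, Fintype.card_fin, nsmul_eq_mul, mul_one,
          sum_ite_eq', mem_univ, if_true]
    _ ≤ ∑ k, (Pi.single (Order.pred k) 1 : Fin n → ℝ) ((finRotate n).symm k) := by
        refine sum_le_sum fun k _ => ?_
        split_ifs with hk
        · rw [Pi.single_apply]; split_ifs <;> norm_num
        · rw [finRotate_symm_eq_pred hk, Pi.single_eq_same, sub_zero]
    _ = ∑ i, predProfile μ i ((μ.trans (finRotate n).symm) i) :=
        (Equiv.sum_comp μ _).symm
    _ ≤ SWopt (predProfile μ) := sum_le_SWopt _ _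

end predProfile

/-- Under the unit-range representation, the pure Price of Anarchy of every
deterministic mechanism that always admits a pure Nash equilibrium is `Ω(n)`:
there are `c > 0` and `N` such that for every `n ≥ N` and every such mechanism
`M`, there are a unit-range profile `w` and a pure Nash equilibrium `s` of `M`
at `w` with `SW_OPT(w) ≥ c · n · SW_M(w, s)`. -/
theorem deterministic_unit_range_poa_lower :
    ∃ c : ℝ, 0 < c ∧ ∃ N : ℕ,
      ∀ n : ℕ, N ≤ n →
        ∀ M : (Fin n → Fin n → ℝ) → Equiv.Perm (Fin n),
          (∀ u : Fin n → Fin n → ℝ, (∀ i, UnitRange (u i)) → ∃ s, DetNashUR M u s) →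
          ∃ (w s : Fin n → Fin n → ℝ), (∀ i, UnitRange (w i)) ∧ DetNashUR M w s ∧
            c * n * ∑ i, w i (M s i) ≤ SWopt w := by
  refine ⟨1 / 2, by norm_num, 2, fun n hn M hM => ?_⟩
  have : NeZero n := ⟨by omega⟩
  obtain ⟨v, hvUR, hv⟩ := exists_unitRange_strictAnti hn
  obtain ⟨s, hs⟩ := hM (fun _ => v) (fun _ => hvUR)
  refine ⟨predProfile (M s), s, fun i => unitRange_single hn _,
    hs.of_le_imp_le fun _ _ hj => single_pred_apply_le_apply_self (hv.le_iff_ge.mp hj), ?_⟩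
  have hOPT := natCast_sub_one_le_SWopt_predProfile (M s)
  have hn' : (2 : ℝ) ≤ n := by exact_mod_cast hn
  rw [sum_predProfile_self]
  linarith
end

section
/- For every ε ∈ (0,1) there exist a constant c > 0 and N ∈ ℕ such that for every perfect square n ≥ N and every randomized mechanism M mapping reported profiles of unit-range valuations to probability distributions over matchings that admits a pure Nash equilibrium at every true profile of unit-range valuations, there exist a unit-range valuation profile w and an ε-approximate pure Nash equilibrium s of M at w such that SW_M(w,s) > 0 and SW_OPT(w) ≥ c·n^{1/4}·SW_M(w,s); i.e., the ε-approximate Price of Anarchy of every such mechanism is Ω(n^{1/4}) under the unit-range representation. -/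
def CardinalNashUR {n : ℕ} (p : (Fin n → Fin n → ℝ) → Fin n → Fin n → ℝ)
    (u s : Fin n → Fin n → ℝ) : Prop :=
  (∀ i, UnitRange (s i)) ∧
    ∀ (i : Fin n) (s' : Fin n → ℝ), UnitRange s' →
      ∑ j, p (Function.update s i s') i j * u i j ≤ ∑ j, p s i j * u i j

def ApproxNashUR {n : ℕ} (ε : ℝ) (p : (Fin n → Fin n → ℝ) → Fin n → Fin n → ℝ)
    (u s : Fin n → Fin n → ℝ) : Prop :=
  (∀ i, UnitRange (s i)) ∧
    ∀ (i : Fin n) (s' : Fin n → ℝ), UnitRange s' →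
      ∑ j, p (Function.update s i s') i j * u i j ≤ (∑ j, p s i j * u i j) + ε

/-- Under the unit-range representation, for every `ε ∈ (0,1)` the
`ε`-approximate Price of Anarchy of every (randomized) mechanism that admits a
pure Nash equilibrium at every unit-range profile is `Ω(n^{1/4})`: there are
`c > 0` and `N` such that for every perfect square `n ≥ N` and every such
mechanism, there are a unit-range profile `w` and an `ε`-approximate pure Nash
equilibrium `s` at `w` with positive welfare and
`SW_OPT(w) ≥ c · n^{1/4} · SW_M(w, s)`. -/
theorem approx_poa_unit_range_lower (ε : ℝ) (hε0 : 0 < ε) (hε1 : ε < 1) :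
    ∃ c : ℝ, 0 < c ∧ ∃ N : ℕ,
      ∀ n k : ℕ, N ≤ n → n = k ^ 2 →
        ∀ p : (Fin n → Fin n → ℝ) → Fin n → Fin n → ℝ,
          (∀ s : Fin n → Fin n → ℝ, (∀ i, UnitRange (s i)) →
            (∀ i j, 0 ≤ p s i j) ∧ (∀ i, ∑ j, p s i j = 1) ∧ (∀ j, ∑ i, p s i j = 1)) →
          (∀ u : Fin n → Fin n → ℝ, (∀ i, UnitRange (u i)) →
            ∃ s, CardinalNashUR p u s) →
          ∃ (w s : Fin n → Fin n → ℝ), (∀ i, UnitRange (w i)) ∧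
            ApproxNashUR ε p w s ∧ 0 < ∑ i, ∑ j, p s i j * w i j ∧
            c * (n : ℝ) ^ ((1 : ℝ) / 4) * ∑ i, ∑ j, p s i j * w i j ≤ SWopt w := by
  refine ⟨ε / 8, by linarith, 4, ?_⟩
  intro n k hn hk p hp hNash
  haveI : NeZero n := ⟨by omega⟩
  have hn4 : 4 ≤ n := hn
  have hnR : (4 : ℝ) ≤ (n : ℝ) := by exact_mod_cast hn4
  -- the base profile: everyone values only item 0
  set u : Fin n → Fin n → ℝ := fun _ j => if j = 0 then 1 else 0 with hu_def
  have hone : ((⟨1, by omega⟩ : Fin n)) ≠ 0 := by simp [Fin.ext_iff]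
  have htwo : ((⟨2, by omega⟩ : Fin n)) ≠ 0 := by simp [Fin.ext_iff]
  have huUR : ∀ i, UnitRange (u i) := by
    intro i
    refine ⟨fun j => ?_, ⟨0, by simp [hu_def]⟩, ⟨⟨1, by omega⟩, by simp [hu_def, hone]⟩⟩
    by_cases h : j = 0 <;> simp [hu_def, h]
  obtain ⟨s, hsUR, hsNE⟩ := hNash u huUR
  obtain ⟨hDnn, hDrow, hDcol⟩ := hp s hsUR
  -- find a cyclic shift with small diagonal mass
  have hsum : ∑ a : Fin n, ∑ j : Fin n, p s (a + j) j = (n : ℝ) := by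
    rw [Finset.sum_comm]
    have hcol : ∀ j : Fin n, ∑ a : Fin n, p s (a + j) j = 1 := by
      intro j
      rw [← hDcol j]
      exact Fintype.sum_equiv (Equiv.addRight j) _ _ (fun a => rfl)
    simp [hcol]
  have hex : ∃ a : Fin n, ∑ j : Fin n, p s (a + j) j ≤ 1 := by
    by_contra hcon
    push_neg at hcon
    have hlt : (n : ℝ) < ∑ a : Fin n, ∑ j : Fin n, p s (a + j) j := by
      calc (n : ℝ) = ∑ _a : Fin n, (1 : ℝ) := by simp
        _ < _ := Finset.sum_lt_sum_of_nonempty ⟨0, Finset.mem_univ 0⟩ (fun a _ => hcon a)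
    rw [hsum] at hlt
    exact lt_irrefl _ hlt
  obtain ⟨a, ha⟩ := hex
  -- the perturbed profile w
  set w : Fin n → Fin n → ℝ := fun i j => if j = 0 then 1 else if i = a + j then ε / 2 else 0
    with hw_def
  have hw01 : ∀ i j, 0 ≤ w i j ∧ w i j ≤ 1 := by
    intro i j
    by_cases h : j = 0
    · simp [hw_def, h]
    · by_cases h2 : i = a + j <;> simp [hw_def, h, h2] <;> constructor <;> linarith
  have hwUR : ∀ i, UnitRange (w i) := by
    intro i
    refine ⟨hw01 i, ⟨0, by simp [hw_def]⟩, ?_⟩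
    by_cases h1 : i = a + ⟨1, by omega⟩
    · refine ⟨⟨2, by omega⟩, ?_⟩
      have hne2 : i ≠ a + ⟨2, by omega⟩ := by
        rw [h1]
        intro hc
        have := add_left_cancel hc
        simp [Fin.ext_iff] at this
      simp [hw_def, htwo, hne2]
    · exact ⟨⟨1, by omega⟩, by simp [hw_def, hone, h1]⟩
  have huw : ∀ i j, u i j ≤ w i j := by
    intro i j
    by_cases h : j = 0
    · simp [hu_def, hw_def, h]
    · by_cases h2 : i = a + j <;> simp [hu_def, hw_def, h, h2] <;> linarith
  have hwu : ∀ i j, w i j ≤ u i j + ε / 2 := by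
    intro i j
    by_cases h : j = 0
    · simp [hu_def, hw_def, h]; linarith
    · by_cases h2 : i = a + j <;> simp [hu_def, hw_def, h, h2] <;> linarith
  -- s is an ε-approximate Nash equilibrium at w
  have hApprox : ApproxNashUR ε p w s := by
    refine ⟨hsUR, ?_⟩
    intro i s' hs'
    set t := Function.update s i s' with ht
    have htUR : ∀ i', UnitRange (t i') := by
      intro i'
      rcases eq_or_ne i' i with rfl | h
      · rw [ht, Function.update_self]; exact hs'
      · rw [ht, Function.update_of_ne h]; exact hsUR i'
    obtain ⟨hqnn, hqrow, -⟩ := hp t htUR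
    have h1 : ∑ j, p t i j * w i j ≤ (∑ j, p t i j * u i j) + ε / 2 := by
      have hstep : ∑ j, p t i j * w i j ≤ ∑ j, (p t i j * u i j + p t i j * (ε / 2)) := by
        apply Finset.sum_le_sum
        intro j _
        have h2 := hwu i j
        have h3 := hqnn i j
        nlinarith
      calc ∑ j, p t i j * w i j ≤ _ := hstep
        _ = (∑ j, p t i j * u i j) + (∑ j, p t i j) * (ε / 2) := by
            rw [Finset.sum_add_distrib, Finset.sum_mul]
        _ = (∑ j, p t i j * u i j) + ε / 2 := by rw [hqrow i]; ring
    have h2 : ∑ j, p t i j * u i j ≤ ∑ j, p s i j * u i j := hsNE i s' hs'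
    have h3 : ∑ j, p s i j * u i j ≤ ∑ j, p s i j * w i j := by
      apply Finset.sum_le_sum
      intro j _
      exact mul_le_mul_of_nonneg_left (huw i j) (hDnn i j)
    linarith
  -- welfare bounds
  set S := ∑ i, ∑ j, p s i j * w i j with hS_def
  have hS_eq : S = ∑ j, ∑ i, p s i j * w i j := Finset.sum_comm
  have hcolw : ∀ j : Fin n, ∑ i, p s i j * w i j
      = if j = 0 then 1 else p s (a + j) j * (ε / 2) := by
    intro j
    by_cases h : j = 0
    · subst h
      rw [if_pos rfl]
      have hterm : ∀ i : Fin n, p s i 0 * w i 0 = p s i 0 := by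
        intro i; simp [hw_def]
      rw [Finset.sum_congr rfl (fun i _ => hterm i), hDcol 0]
    · rw [if_neg h, Finset.sum_eq_single (a + j)]
      · congr 1
        simp [hw_def, h]
      · intro i _ hi
        simp [hw_def, h, hi]
      · intro habs
        exact absurd (Finset.mem_univ _) habs
  have hS_le : S ≤ 1 + ε / 2 := by
    rw [hS_eq, Finset.sum_congr rfl (fun j _ => hcolw j)]
    have hb : ∀ j : Fin n, (if j = 0 then (1 : ℝ) else p s (a + j) j * (ε / 2))
        ≤ (if j = 0 then (1 : ℝ) else 0) + p s (a + j) j * (ε / 2) := by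
      intro j
      by_cases h : j = 0
      · subst h
        simp only [if_pos rfl, if_true]
        have := mul_nonneg (hDnn (a + (0 : Fin n)) 0) (by linarith : (0:ℝ) ≤ ε / 2)
        linarith
      · simp [h]
    calc ∑ j : Fin n, (if j = 0 then (1 : ℝ) else p s (a + j) j * (ε / 2))
        ≤ ∑ j : Fin n, ((if j = 0 then (1 : ℝ) else 0) + p s (a + j) j * (ε / 2)) :=
          Finset.sum_le_sum (fun j _ => hb j)
      _ = 1 + (∑ j : Fin n, p s (a + j) j) * (ε / 2) := by
          rw [Finset.sum_add_distrib, ← Finset.sum_mul]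
          congr 1
          simp
      _ ≤ 1 + ε / 2 := by nlinarith
  have hS_ge1 : 1 ≤ S := by
    rw [hS_eq, Finset.sum_congr rfl (fun j _ => hcolw j)]
    calc (1 : ℝ) = ∑ j : Fin n, (if j = 0 then (1 : ℝ) else 0) := by simp
      _ ≤ _ := by
          apply Finset.sum_le_sum
          intro j _
          by_cases h : j = 0 <;> simp [h]
          exact mul_nonneg (hDnn _ _) (by linarith)
  -- optimal welfare lower bound
  have hOpt : 1 + ((n : ℝ) - 1) * (ε / 2) ≤ SWopt w := by
    have hμ := Finset.le_sup'
      (fun μ : Equiv.Perm (Fin n) => ∑ i, w i (μ i))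
      (Finset.mem_univ (Equiv.subRight a))
    refine le_trans ?_ hμ
    have hterm : ∀ i : Fin n, w i ((Equiv.subRight a) i) = if i = a then 1 else ε / 2 := by
      intro i
      rcases eq_or_ne i a with rfl | h
      · simp [hw_def]
      · have h0 : i - a ≠ 0 := sub_ne_zero.mpr h
        have h2 : i = a + (i - a) := by abel
        simp only [Equiv.subRight_apply, hw_def, if_neg h0, if_neg h, ← h2, if_pos rfl]
        simp
    have hsum2 : (∑ i, w i ((Equiv.subRight a) i))
        = ∑ i : Fin n, (ε / 2 + if i = a then 1 - ε / 2 else 0) := by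
      refine Finset.sum_congr rfl (fun i _ => ?_)
      rw [hterm i]
      by_cases h : i = a <;> simp [h] <;> ring
    show 1 + ((n : ℝ) - 1) * (ε / 2) ≤ ∑ i, w i ((Equiv.subRight a) i)
    rw [hsum2, Finset.sum_add_distrib, Finset.sum_const, Finset.card_univ, Fintype.card_fin,
      Finset.sum_ite_eq' Finset.univ a (fun _ => (1 : ℝ) - ε / 2), if_pos (Finset.mem_univ a)]
    have : (n : ℝ) * (ε / 2) = (n : ℕ) • (ε / 2) := by simp [nsmul_eq_mul]
    rw [← this]
    ring_nf
    linarith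
  refine ⟨w, s, hwUR, hApprox, by linarith, ?_⟩
  have hquarter : (n : ℝ) ^ ((1 : ℝ) / 4) ≤ (n : ℝ) := by
    calc (n : ℝ) ^ ((1 : ℝ) / 4) ≤ (n : ℝ) ^ (1 : ℝ) :=
          Real.rpow_le_rpow_of_exponent_le (by linarith) (by norm_num)
      _ = (n : ℝ) := Real.rpow_one _
  have hq0 : 0 ≤ (n : ℝ) ^ ((1 : ℝ) / 4) := Real.rpow_nonneg (by positivity) _
  have key : ε / 8 * (n : ℝ) ^ ((1 : ℝ) / 4) * S ≤ 1 + ((n : ℝ) - 1) * (ε / 2) := by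
    have h32 : S ≤ 3 / 2 := by linarith
    have step1 : ε / 8 * (n : ℝ) ^ ((1 : ℝ) / 4) * S ≤ ε / 8 * (n : ℝ) * (3 / 2) := by
      have h1 : ε / 8 * (n : ℝ) ^ ((1 : ℝ) / 4) * S ≤ ε / 8 * (n : ℝ) ^ ((1 : ℝ) / 4) * (3 / 2) := by
        apply mul_le_mul_of_nonneg_left h32
        positivity
      have h2 : ε / 8 * (n : ℝ) ^ ((1 : ℝ) / 4) * (3 / 2) ≤ ε / 8 * (n : ℝ) * (3 / 2) := by
        apply mul_le_mul_of_nonneg_right _ (by norm_num)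
        exact mul_le_mul_of_nonneg_left hquarter (by linarith)
      linarith
    have hq : (0 : ℝ) ≤ ε * (n : ℝ) := mul_nonneg hε0.le (by linarith)
    nlinarith
  linarith
end

section
/- In Probabilistic Serial, for every profile s of reported strict orderings, every agent i, and every k ∈ {1,…,n}, the total probability that agent i receives one of the first k items of her own reported ordering is at least k/n; that is, ∑_{t=1}^{k} p_{i, s_i(t)}(s) ≥ k/n, where s_i(t) denotes the t-th item in agent i's reported ordering. In particular, an agent reporting her true preference ordering obtains an allocation that stochastically dominates the uniform vector (1/n, …, 1/n), regardless of the other agents' reports. -/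
/-- The state of the Probabilistic Serial eating process: `rem j` is the remaining
amount of item `j`, `cons i j` the amount of item `j` eaten so far by agent `i`,
`time` the current time, and `fin j` the time at which item `j` was fully consumed. -/
structure PSState (n : ℕ) where
  rem : Fin n → ℝ
  cons : Fin n → Fin n → ℝ
  time : ℝ
  fin : Fin n → ℝ

open Classical in
/-- One phase of the Probabilistic Serial eating process: while some item remains,
every agent eats at rate 1 from her most preferred remaining item (preference
orderings are given as bijections from ranks to items, rank `0` being the most
preferred); the phase lasts until the first moment a currently eaten item is
exhausted. -/
noncomputable def psStep {n : ℕ} (s : Fin n → (Fin n ≃ Fin n)) (st : PSState n) :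
    PSState n :=
  let avail : Finset (Fin n) := Finset.univ.filter (fun j => 0 < st.rem j)
  if h : avail.Nonempty then
    -- the most preferred still-available item of each agent
    let top : Fin n → Fin n := fun i =>
      let R : Finset (Fin n) := Finset.univ.filter (fun r => s i r ∈ avail)
      if hR : R.Nonempty then s i (R.min' hR) else h.choose
    -- the number of agents currently eating item `j`
    let rate : Fin n → ℕ := fun j => (Finset.univ.filter (fun i => top i = j)).card
    -- the duration of the phase: first time an eaten item is exhausted
    let Δ : ℝ := sInf {x : ℝ | ∃ j ∈ avail, 0 < rate j ∧ x = st.rem j / (rate j : ℝ)}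
    { rem := fun j => st.rem j - (rate j : ℝ) * Δ
      cons := fun i j => st.cons i j + (if top i = j then Δ else 0)
      time := st.time + Δ
      fin := fun j =>
        if 0 < st.rem j ∧ st.rem j - (rate j : ℝ) * Δ ≤ 0 then st.time + Δ else st.fin j }
  else st

/-- The final state of the Probabilistic Serial eating process (there are at most
`n` phases, since in each phase at least one item is exhausted). -/
noncomputable def psFinal {n : ℕ} (s : Fin n → (Fin n ≃ Fin n)) : PSState n :=
  (psStep s)^[n] ⟨fun _ => 1, fun _ _ => 0, 0, fun _ => 1⟩

/-- `psProb s i j` is the probability that agent `i` receives item `j` under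
Probabilistic Serial at report profile `s`, i.e. the amount of item `j` eaten by
agent `i`. -/
noncomputable def psProb {n : ℕ} (s : Fin n → (Fin n ≃ Fin n)) (i j : Fin n) : ℝ :=
  (psFinal s).cons i j

/-- `psTime s j` is the time at which item `j` is fully consumed under
Probabilistic Serial at report profile `s`. -/
noncomputable def psTime {n : ℕ} (s : Fin n → (Fin n ≃ Fin n)) (j : Fin n) : ℝ :=
  (psFinal s).fin j

/-- The expected social welfare of Probabilistic Serial at report profile `s`
under true valuation profile `u`. -/
noncomputable def psSW {n : ℕ} (u : Fin n → Fin n → ℝ) (s : Fin n → (Fin n ≃ Fin n)) : ℝ :=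
  ∑ i, ∑ j, psProb s i j * u i j

/-- `s` is a pure Nash equilibrium of Probabilistic Serial at true valuation
profile `u`: no agent can strictly increase her expected utility by unilaterally
reporting a different ordering. -/
def PSNash {n : ℕ} (u : Fin n → Fin n → ℝ) (s : Fin n → (Fin n ≃ Fin n)) : Prop :=
  ∀ (i : Fin n) (s' : Fin n ≃ Fin n),
    ∑ j, psProb (Function.update s i s') i j * u i j ≤ ∑ j, psProb s i j * u i j

/-
Within a phase, agent `i` eats from her `k` favourite items whenever one of them is still
available, while the `n` agents together eat at total rate `n`. Hence the remaining supply of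
those `k` items shrinks at most `n` times as fast as agent `i`'s share of them grows; since the
supply drops from `k` to `0` over the process, her share ends up at least `k / n`.
-/

open Finset

-- The `let`-bound quantities of one phase of `psStep`.
noncomputable def psAvail {n : ℕ} (st : PSState n) : Finset (Fin n) :=
  univ.filter (fun j => 0 < st.rem j)

noncomputable def psTop {n : ℕ} (s : Fin n → (Fin n ≃ Fin n)) (st : PSState n)
    (h : (psAvail st).Nonempty) (i : Fin n) : Fin n :=
  let R : Finset (Fin n) := univ.filter (fun r => s i r ∈ psAvail st)
  if hR : R.Nonempty then s i (R.min' hR) else h.choose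

noncomputable def psRate {n : ℕ} (s : Fin n → (Fin n ≃ Fin n)) (st : PSState n)
    (h : (psAvail st).Nonempty) (j : Fin n) : ℕ :=
  #(univ.filter (fun i => psTop s st h i = j))

def psExhaustTimes {n : ℕ} (s : Fin n → (Fin n ≃ Fin n)) (st : PSState n)
    (h : (psAvail st).Nonempty) : Set ℝ :=
  {x | ∃ j ∈ psAvail st, 0 < psRate s st h j ∧ x = st.rem j / (psRate s st h j : ℝ)}

noncomputable def psDelta {n : ℕ} (s : Fin n → (Fin n ≃ Fin n)) (st : PSState n)
    (h : (psAvail st).Nonempty) : ℝ :=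
  sInf (psExhaustTimes s st h)

def psInit (n : ℕ) : PSState n := ⟨fun _ => 1, fun _ _ => 0, 0, fun _ => 1⟩

section Phase

variable {n : ℕ} (s : Fin n → (Fin n ≃ Fin n)) (st : PSState n)

lemma mem_psAvail {j : Fin n} : j ∈ psAvail st ↔ 0 < st.rem j := by
  simp [psAvail]

lemma psStep_of_not_nonempty (h : ¬ (psAvail st).Nonempty) : psStep s st = st := by
  show (if h' : (psAvail st).Nonempty then _ else st) = _
  rw [dif_neg h]

variable (h : (psAvail st).Nonempty)

lemma psStep_of_nonempty :
    psStep s st =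
      { rem := fun j => st.rem j - (psRate s st h j : ℝ) * psDelta s st h
        cons := fun i j => st.cons i j + (if psTop s st h i = j then psDelta s st h else 0)
        time := st.time + psDelta s st h
        fin := fun j =>
          if 0 < st.rem j ∧ st.rem j - (psRate s st h j : ℝ) * psDelta s st h ≤ 0 then
            st.time + psDelta s st h else st.fin j } := by
  show (if h' : (psAvail st).Nonempty then _ else st) = _
  rw [dif_pos h]; rfl

lemma psStep_rem (j : Fin n) :
    (psStep s st).rem j = st.rem j - (psRate s st h j : ℝ) * psDelta s st h := by
  rw [psStep_of_nonempty s st h]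

lemma psStep_cons (i j : Fin n) :
    (psStep s st).cons i j = st.cons i j + (if psTop s st h i = j then psDelta s st h else 0) := by
  rw [psStep_of_nonempty s st h]

lemma exists_rank_le_psTop_eq (i t : Fin n) (ht : s i t ∈ psAvail st) :
    ∃ r ≤ t, psTop s st h i = s i r := by
  have ht' : t ∈ univ.filter (fun r => s i r ∈ psAvail st) := mem_filter.2 ⟨mem_univ _, ht⟩
  refine ⟨_, min'_le _ t ht', ?_⟩
  rw [psTop, dif_pos ⟨t, ht'⟩]

lemma psTop_mem_psAvail (i : Fin n) : psTop s st h i ∈ psAvail st := by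
  obtain ⟨j, hj⟩ := id h
  have hR : (univ.filter (fun r => s i r ∈ psAvail st)).Nonempty :=
    ⟨(s i).symm j, mem_filter.2 ⟨mem_univ _, by rwa [Equiv.apply_symm_apply]⟩⟩
  rw [psTop, dif_pos hR]
  exact (mem_filter.1 (min'_mem _ hR)).2

lemma mem_psAvail_of_psRate_pos {j : Fin n} (hj : 0 < psRate s st h j) : j ∈ psAvail st := by
  obtain ⟨i, hi⟩ := card_pos.1 hj
  exact (mem_filter.1 hi).2 ▸ psTop_mem_psAvail s st h i

lemma sum_psRate : ∑ j, psRate s st h j = n := by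
  simpa [psRate] using (card_eq_sum_card_fiberwise (f := psTop s st h) (s := univ) (t := univ)
    fun _ _ => mem_univ _).symm

lemma finite_psExhaustTimes : (psExhaustTimes s st h).Finite :=
  (Set.finite_range fun j => st.rem j / (psRate s st h j : ℝ)).subset
    fun _ ⟨j, _, _, hx⟩ => ⟨j, hx.symm⟩

lemma psDelta_mem_psExhaustTimes : psDelta s st h ∈ psExhaustTimes s st h := by
  obtain ⟨j, hj⟩ := id h
  have hrate : 0 < psRate s st h (psTop s st h j) := card_pos.2 ⟨j, by simp⟩
  exact Set.Nonempty.csInf_mem ⟨_, _, psTop_mem_psAvail s st h j, hrate, rfl⟩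
    (finite_psExhaustTimes s st h)

lemma psDelta_nonneg : 0 ≤ psDelta s st h := by
  obtain ⟨j, hj, -, hΔ⟩ := psDelta_mem_psExhaustTimes s st h
  rw [hΔ]
  exact div_nonneg ((mem_psAvail st).1 hj).le (Nat.cast_nonneg _)

lemma psRate_mul_psDelta_le {j : Fin n} (hj : 0 < psRate s st h j) :
    (psRate s st h j : ℝ) * psDelta s st h ≤ st.rem j := by
  have hj' : (0 : ℝ) < psRate s st h j := by exact_mod_cast hj
  have hle : psDelta s st h ≤ st.rem j / psRate s st h j :=
    csInf_le (finite_psExhaustTimes s st h).bddBelow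
      ⟨j, mem_psAvail_of_psRate_pos s st h hj, hj, rfl⟩
  rwa [le_div_iff₀' hj'] at hle

end Phase

noncomputable def topSum {n : ℕ} (s : Fin n → (Fin n ≃ Fin n)) (i : Fin n) (k : ℕ)
    (f : Fin n → ℝ) : ℝ :=
  ∑ t ∈ univ.filter (fun t : Fin n => (t : ℕ) < k), f (s i t)

section Iteration

variable {n : ℕ} (s : Fin n → (Fin n ≃ Fin n))

lemma psStep_rem_nonneg {st : PSState n} (hrem : ∀ j, 0 ≤ st.rem j) (j : Fin n) :
    0 ≤ (psStep s st).rem j := by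
  by_cases h : (psAvail st).Nonempty
  · rw [psStep_rem s st h]
    rcases (psRate s st h j).eq_zero_or_pos with hz | hpos
    · simpa [hz] using hrem j
    · linarith [psRate_mul_psDelta_le s st h hpos]
  · rw [psStep_of_not_nonempty s st h]
    exact hrem j

lemma card_psAvail_psStep_lt {st : PSState n} (h : (psAvail st).Nonempty) :
    #(psAvail (psStep s st)) < #(psAvail st) := by
  obtain ⟨j, hj, hrate, hΔ⟩ := psDelta_mem_psExhaustTimes s st h
  have hrate' : (0 : ℝ) < psRate s st h j := by exact_mod_cast hrate
  refine card_lt_card ⟨fun x hx => ?_, fun hsub => ?_⟩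
  · rw [mem_psAvail, psStep_rem s st h] at hx
    rw [mem_psAvail]
    nlinarith [psDelta_nonneg s st h, (psRate s st h x).cast_nonneg (α := ℝ)]
  · have := (mem_psAvail _).1 (hsub hj)
    rw [psStep_rem s st h, hΔ, mul_div_cancel₀ _ hrate'.ne'] at this
    linarith

lemma topSum_rem_sub_psStep_le (i : Fin n) (k : ℕ) (st : PSState n) :
    topSum s i k st.rem - topSum s i k (psStep s st).rem
      ≤ n * (topSum s i k ((psStep s st).cons i) - topSum s i k (st.cons i)) := by
  by_cases h : (psAvail st).Nonempty
  · simp only [topSum, psStep_rem s st h, psStep_cons s st h, sum_sub_distrib, sum_add_distrib,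
      sub_sub_cancel, add_sub_cancel_left, ← sum_mul]
    set T := univ.filter (fun t : Fin n => (t : ℕ) < k)
    by_cases hex : ∃ t ∈ T, 0 < psRate s st h (s i t)
    · obtain ⟨t, ht, hpos⟩ := hex
      obtain ⟨r, hrt, htop⟩ :=
        exists_rank_le_psTop_eq s st h i t (mem_psAvail_of_psRate_pos s st h hpos)
      have hr : r ∈ T := by
        simp only [T, mem_filter, mem_univ, true_and] at ht ⊢
        exact lt_of_le_of_lt hrt ht
      have hgain : ∑ x ∈ T, (if psTop s st h i = s i x then psDelta s st h else 0)
          = psDelta s st h := by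
        simp_rw [htop, (s i).injective.eq_iff]
        rw [sum_ite_eq, if_pos hr]
      have hrates : ∑ x ∈ T, (psRate s st h (s i x) : ℝ) ≤ n :=
        calc ∑ x ∈ T, (psRate s st h (s i x) : ℝ)
            ≤ ∑ x, (psRate s st h (s i x) : ℝ) :=
              sum_le_univ_sum_of_nonneg fun _ => Nat.cast_nonneg _
          _ = ∑ j, (psRate s st h j : ℝ) :=
              Equiv.sum_comp (s i) fun j => (psRate s st h j : ℝ)
          _ = n := by exact_mod_cast sum_psRate s st h
      rw [hgain]
      exact mul_le_mul_of_nonneg_right hrates (psDelta_nonneg s st h)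
    · push Not at hex
      have hrates : ∑ x ∈ T, (psRate s st h (s i x) : ℝ) = 0 :=
        sum_eq_zero fun t ht => by simp [Nat.le_zero.1 (hex t ht)]
      rw [hrates, zero_mul]
      refine mul_nonneg (Nat.cast_nonneg _) (sum_nonneg fun _ _ => ?_)
      split_ifs
      exacts [psDelta_nonneg s st h, le_rfl]
  · simp [psStep_of_not_nonempty s st h]

lemma iterate_psStep_rem_nonneg (m : ℕ) {st : PSState n} (hrem : ∀ j, 0 ≤ st.rem j)
    (j : Fin n) : 0 ≤ ((psStep s)^[m] st).rem j := by
  induction m generalizing j with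
  | zero => exact hrem j
  | succ m ih => rw [Function.iterate_succ_apply']; exact psStep_rem_nonneg s ih j

lemma card_psAvail_iterate_psStep_le (m : ℕ) (st : PSState n) :
    #(psAvail ((psStep s)^[m] st)) ≤ #(psAvail st) - m := by
  induction m with
  | zero => simp
  | succ m ih =>
    rw [Function.iterate_succ_apply']
    by_cases h : (psAvail ((psStep s)^[m] st)).Nonempty
    · have := card_psAvail_psStep_lt s h
      omega
    · rw [psStep_of_not_nonempty s _ h, not_nonempty_iff_eq_empty.1 h, card_empty]
      exact Nat.zero_le _

lemma topSum_rem_sub_iterate_psStep_le (i : Fin n) (k m : ℕ) (st : PSState n) :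
    topSum s i k st.rem - topSum s i k ((psStep s)^[m] st).rem
      ≤ n * (topSum s i k (((psStep s)^[m] st).cons i) - topSum s i k (st.cons i)) := by
  induction m with
  | zero => simp
  | succ m ih =>
    have := topSum_rem_sub_psStep_le s i k ((psStep s)^[m] st)
    rw [Function.iterate_succ_apply']
    linarith

lemma psFinal_eq_iterate : psFinal s = (psStep s)^[n] (psInit n) := rfl

lemma psFinal_rem (j : Fin n) : (psFinal s).rem j = 0 := by
  have hempty : psAvail (psFinal s) = ∅ := by
    have := card_psAvail_iterate_psStep_le s n (psInit n)
    have := card_le_univ (psAvail (psInit n))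
    rw [← card_eq_zero, psFinal_eq_iterate]
    simp only [Fintype.card_fin] at *
    omega
  refine le_antisymm (not_lt.1 fun hpos => ?_)
    (iterate_psStep_rem_nonneg s n (fun _ => zero_le_one) j)
  simpa [hempty] using (mem_psAvail _).2 hpos

end Iteration

lemma topSum_const {n : ℕ} (s : Fin n → (Fin n ≃ Fin n)) (i : Fin n) {k : ℕ} (hk : k ≤ n)
    (c : ℝ) : topSum s i k (fun _ => c) = k * c := by
  rw [topSum, sum_const, Fin.card_filter_val_lt, min_eq_right hk, nsmul_eq_mul]

theorem ps_safe_strategy_general (n : ℕ) (s : Fin n → (Fin n ≃ Fin n)) (i : Fin n)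
    (k : ℕ) (h2 : k ≤ n) :
    (k : ℝ) / n ≤ ∑ t : Fin n, if (t : ℕ) < k then psProb s i (s i t) else 0 := by
  have hn : (0 : ℝ) < n := by exact_mod_cast i.pos
  have hdecay := topSum_rem_sub_iterate_psStep_le s i k n (psInit n)
  have hinit_rem : topSum s i k (psInit n).rem = k :=
    (topSum_const s i h2 1).trans (mul_one _)
  have hinit_cons : topSum s i k ((psInit n).cons i) = 0 :=
    (topSum_const s i h2 0).trans (mul_zero _)
  have hfinal_rem : topSum s i k (psFinal s).rem = 0 := by
    simpa [funext (psFinal_rem s)] using topSum_const s i h2 0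
  rw [← psFinal_eq_iterate, hinit_rem, hinit_cons, hfinal_rem] at hdecay
  rw [div_le_iff₀ hn, ← sum_filter]
  change (k : ℝ) ≤ topSum s i k ((psFinal s).cons i) * n
  linarith

/-- Probabilistic Serial has a safe strategy: for every report profile `s`,
every agent `i` and every `k ∈ {1,…,n}`, the total probability that agent `i`
receives one of the first `k` items of her own reported ordering is at least
`k/n`; in particular a truthful report yields an allocation that stochastically
dominates the uniform vector `(1/n, …, 1/n)`, regardless of the other reports. -/
theorem ps_safe_strategy (n : ℕ) (s : Fin n → (Fin n ≃ Fin n)) (i : Fin n)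
    (k : ℕ) (h1 : 1 ≤ k) (h2 : k ≤ n) :
    (k : ℝ) / n ≤ ∑ t : Fin n, if (t : ℕ) < k then psProb s i (s i t) else 0 :=
  ps_safe_strategy_general n s i k h2
end

section
/- Let n ≥ 1 and let w_1, …, w_n be real numbers with 0 ≤ w_j ≤ 1 for every j. Then (∑_{j=1}^n w_j)² ≤ 2·∑_{j=1}^n j·w_j. -/
lemma aux_sq_sum (w : ℕ → ℝ) : ∀ n : ℕ, (∀ j ∈ Finset.Icc 1 n, 0 ≤ w j ∧ w j ≤ 1) →
    (∑ j ∈ Finset.Icc 1 n, w j) ^ 2 ≤ 2 * ∑ j ∈ Finset.Icc 1 n, (j : ℝ) * w j := by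
  intro n
  induction n with
  | zero => simp
  | succ n ih =>
    intro hw
    have hsub : ∀ j ∈ Finset.Icc 1 n, 0 ≤ w j ∧ w j ≤ 1 := by
      intro j hj
      exact hw j (Finset.mem_Icc.mpr ⟨(Finset.mem_Icc.mp hj).1, (Finset.mem_Icc.mp hj).2.trans (Nat.le_succ n)⟩)
    have hIH := ih hsub
    have hmem : n + 1 ∈ Finset.Icc 1 (n+1) := Finset.mem_Icc.mpr ⟨Nat.succ_le_succ (Nat.zero_le n), le_rfl⟩
    have hwn := hw (n+1) hmem
    have hS : (∑ j ∈ Finset.Icc 1 n, w j) ≤ n := by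
      calc (∑ j ∈ Finset.Icc 1 n, w j) ≤ ∑ j ∈ Finset.Icc 1 n, (1:ℝ) :=
            Finset.sum_le_sum (fun j hj => (hsub j hj).2)
        _ = n := by simp
    have hS0 : 0 ≤ ∑ j ∈ Finset.Icc 1 n, w j :=
      Finset.sum_nonneg (fun j hj => (hsub j hj).1)
    rw [Finset.sum_Icc_succ_top (Nat.succ_le_succ (Nat.zero_le n)),
        Finset.sum_Icc_succ_top (Nat.succ_le_succ (Nat.zero_le n))]
    have hsq : w (n+1) ^ 2 ≤ w (n+1) := by nlinarith [hwn.1, hwn.2]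
    push_cast
    nlinarith [hwn.1, hwn.2, hS, hS0, hIH, hsq]

/-- For reals `w_1, …, w_n ∈ [0,1]`, `(∑_{j=1}^n w_j)² ≤ 2 ∑_{j=1}^n j · w_j`. -/
theorem sq_sum_le_two_weighted_sum (n : ℕ) (hn : 1 ≤ n) (w : ℕ → ℝ)
    (hw : ∀ j ∈ Finset.Icc 1 n, 0 ≤ w j ∧ w j ≤ 1) :
    (∑ j ∈ Finset.Icc 1 n, w j) ^ 2 ≤ 2 * ∑ j ∈ Finset.Icc 1 n, (j : ℝ) * w j :=
  aux_sq_sum w n hw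
end

section
/- There is a universal constant C > 0 such that for every number of agents n, every profile u of unit-range valuations, and every pure Nash equilibrium s of Probabilistic Serial at u, SW_OPT(u) ≤ C·√n·SW_PS(u,s); i.e., the pure Price of Anarchy of Probabilistic Serial is O(√n) under the unit-range representation. -/
/-!
Write `F_s(j)` for the time at which item `j` is exhausted when the agents report `s`, and `U_i`
for agent `i`'s utility at `s`.

* An agent who ranks `j` first eats it until it is exhausted. Hence if `i` deviates to such a
  report, giving the profile `s'`, the equilibrium condition yields `u_i(j) F_{s'}(j) ≤ U_i`.
* One agent's deviation at most halves exhaustion times: `F_s(j) ≤ 2 F_{s'}(j)`. Take a violating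
  item `j` with `F_{s'}(j)` minimal. Every other agent can start eating `j` under `s` by twice her
  starting time under `s'`, and `j` lasts beyond `2 F_{s'}(j)` under `s`, so she eats at least
  twice as much of `j` under `s`. Hence the deviator eats at least half of `j` under `s'`, which
  forces `F_{s'}(j) ≥ 1/2 ≥ F_s(j)/2`.
* At most `n t` items are exhausted by time `t`; in particular `F_s(j) ≥ 1/n`.

So `u_i(j) F_s(j) ≤ 2 U_i` and `u_i(j) ≤ n U_i`; the latter, at an item of value `1`, gives
`SW_PS ≥ 1`. In an optimal matching, the agents whose item survives past time `1/√n` contribute at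
most `2√n SW_PS`, and the at most `√n` remaining agents contribute at most `√n ≤ √n SW_PS`.
-/

namespace ProbabilisticSerial

open Finset

variable {n : ℕ}

section Phase

variable (s : Fin n → (Fin n ≃ Fin n)) (st : PSState n)

-- The `let`-bound quantities of one phase of `psStep`, spelled identically so that the
-- equations `rem_psStep`, `cons_psStep`, `time_psStep` hold by `rfl`.
noncomputable def available : Finset (Fin n) :=
  univ.filter fun j => 0 < st.rem j

noncomputable def favorite (h : (available st).Nonempty) (i : Fin n) : Fin n :=
  let R : Finset (Fin n) := univ.filter fun r => s i r ∈ available st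
  if hR : R.Nonempty then s i (R.min' hR) else h.choose

noncomputable def numEaters (h : (available st).Nonempty) (j : Fin n) : ℕ :=
  #(univ.filter fun i => favorite s st h i = j)

noncomputable def phaseLength (h : (available st).Nonempty) : ℝ :=
  sInf {x | ∃ j ∈ available st, 0 < numEaters s st h j ∧ x = st.rem j / numEaters s st h j}

variable {s st}

theorem mem_available {j : Fin n} : j ∈ available st ↔ 0 < st.rem j := by
  simp [available]

theorem psStep_of_not_nonempty (h : ¬(available st).Nonempty) : psStep s st = st :=
  dif_neg h

section Nonempty

variable (h : (available st).Nonempty)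

theorem rem_psStep (j : Fin n) :
    (psStep s st).rem j = st.rem j - numEaters s st h j * phaseLength s st h := by
  have h' : (univ.filter fun j => 0 < st.rem j).Nonempty := h
  rw [psStep, dif_pos h']
  rfl

theorem cons_psStep (i j : Fin n) :
    (psStep s st).cons i j =
      st.cons i j + if favorite s st h i = j then phaseLength s st h else 0 := by
  have h' : (univ.filter fun j => 0 < st.rem j).Nonempty := h
  rw [psStep, dif_pos h']
  rfl

theorem time_psStep : (psStep s st).time = st.time + phaseLength s st h := by
  have h' : (univ.filter fun j => 0 < st.rem j).Nonempty := h
  rw [psStep, dif_pos h']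
  rfl

theorem favorite_spec (i : Fin n) :
    favorite s st h i ∈ available st ∧
      ∀ j ∈ available st, (s i).symm (favorite s st h i) ≤ (s i).symm j := by
  obtain ⟨j₀, hj₀⟩ := id h
  have hR : (univ.filter fun r => s i r ∈ available st).Nonempty :=
    ⟨(s i).symm j₀, by simpa using hj₀⟩
  rw [favorite, dif_pos hR]
  refine ⟨by simpa using min'_mem _ hR, fun j hj => ?_⟩
  rw [Equiv.symm_apply_apply]
  exact min'_le _ _ (by simpa using hj)

theorem favorite_eq {i j : Fin n} (hj : j ∈ available st)
    (hbest : ∀ j' ∈ available st, (s i).symm j ≤ (s i).symm j') : favorite s st h i = j :=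
  (s i).symm.injective <|
    le_antisymm ((favorite_spec h i).2 j hj) (hbest _ (favorite_spec h i).1)

theorem numEaters_eq_zero {j : Fin n} (hj : j ∉ available st) : numEaters s st h j = 0 :=
  card_eq_zero.2 <| filter_eq_empty_iff.2 fun i _ hi => hj (hi ▸ (favorite_spec h i).1)

theorem finite_phaseLength_set :
    {x | ∃ j ∈ available st, 0 < numEaters s st h j ∧
      x = st.rem j / numEaters s st h j}.Finite :=
  (Set.finite_range fun j => st.rem j / numEaters s st h j).subset
    (by rintro _ ⟨j, -, -, rfl⟩; exact ⟨j, rfl⟩)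

theorem exists_phaseLength_eq :
    ∃ j ∈ available st, 0 < numEaters s st h j ∧
      phaseLength s st h = st.rem j / numEaters s st h j := by
  obtain ⟨i, -⟩ := id h
  have hmem : phaseLength s st h ∈ {x | ∃ j ∈ available st, 0 < numEaters s st h j ∧
      x = st.rem j / numEaters s st h j} :=
    Set.Nonempty.csInf_mem ⟨_, _, (favorite_spec (s := s) h i).1, card_pos.2 ⟨i, by simp⟩, rfl⟩
      (finite_phaseLength_set h)
  exact hmem

variable (s) in
theorem phaseLength_pos : 0 < phaseLength s st h := by
  obtain ⟨j, hj, hpos, heq⟩ := exists_phaseLength_eq h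
  rw [heq]
  exact div_pos (mem_available.1 hj) (by exact_mod_cast hpos)

theorem numEaters_mul_phaseLength_le (j : Fin n) (hrem : 0 ≤ st.rem j) :
    numEaters s st h j * phaseLength s st h ≤ st.rem j := by
  rcases (numEaters s st h j).eq_zero_or_pos with hzero | hpos
  · simpa [hzero] using hrem
  have hj : j ∈ available st := by
    by_contra hj
    exact hpos.ne' (numEaters_eq_zero h hj)
  have hle : phaseLength s st h ≤ st.rem j / numEaters s st h j :=
    csInf_le (finite_phaseLength_set h).bddBelow ⟨j, hj, hpos, rfl⟩
  rwa [le_div_iff₀' (by exact_mod_cast hpos)] at hle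

theorem cons_psStep_of_favorite {a j : Fin n} (hfav : favorite s st h a = j) :
    (psStep s st).cons a j = st.cons a j + ((psStep s st).time - st.time) := by
  rw [cons_psStep h, if_pos hfav, time_psStep h, add_sub_cancel_left]

end Nonempty

theorem rem_psStep_le (j : Fin n) : (psStep s st).rem j ≤ st.rem j := by
  by_cases h : (available st).Nonempty
  · rw [rem_psStep h]
    nlinarith [phaseLength_pos s h, (numEaters s st h j).cast_nonneg (α := ℝ)]
  · rw [psStep_of_not_nonempty h]

variable (s) in
theorem available_psStep_ssubset (h : (available st).Nonempty) :
    available (psStep s st) ⊂ available st := by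
  refine Finset.ssubset_iff_subset_ne.2 ⟨fun j hj => ?_, fun heq => ?_⟩
  · exact mem_available.2 ((mem_available.1 hj).trans_le (rem_psStep_le j))
  · obtain ⟨j, hj, hpos, hlen⟩ := exists_phaseLength_eq h
    have hj' := heq ▸ hj
    rw [mem_available, rem_psStep h, hlen, mul_div_cancel₀ _ (by positivity), sub_self] at hj'
    exact hj'.false

theorem time_le_time_psStep : st.time ≤ (psStep s st).time := by
  by_cases h : (available st).Nonempty
  · rw [time_psStep h]
    linarith [phaseLength_pos s h]
  · rw [psStep_of_not_nonempty h]

theorem cons_le_cons_psStep (i j : Fin n) : st.cons i j ≤ (psStep s st).cons i j := by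
  by_cases h : (available st).Nonempty
  · rw [cons_psStep h]
    split_ifs
    · linarith [phaseLength_pos s h]
    · linarith
  · rw [psStep_of_not_nonempty h]

theorem cons_psStep_sub_le (i j : Fin n) :
    (psStep s st).cons i j - st.cons i j ≤ (psStep s st).time - st.time := by
  by_cases h : (available st).Nonempty
  · rw [cons_psStep h, time_psStep h]
    split_ifs
    · linarith
    · linarith [phaseLength_pos s h]
  · simp [psStep_of_not_nonempty h]

theorem cons_psStep_of_not_mem {i j : Fin n} (hj : j ∉ available st) :
    (psStep s st).cons i j = st.cons i j := by
  by_cases h : (available st).Nonempty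
  · have hfav : favorite s st h i ≠ j := fun hfav => hj (hfav ▸ (favorite_spec h i).1)
    rw [cons_psStep h, if_neg hfav, add_zero]
  · rw [psStep_of_not_nonempty h]

structure Invariant (st : PSState n) : Prop where
  rem_nonneg : ∀ j, 0 ≤ st.rem j
  cons_nonneg : ∀ i j, 0 ≤ st.cons i j
  rem_eq : ∀ j, st.rem j = 1 - ∑ i, st.cons i j
  sum_cons : ∀ i, ∑ j, st.cons i j = st.time

theorem Invariant.cons_le_time (hst : Invariant st) (i j : Fin n) : st.cons i j ≤ st.time :=
  hst.sum_cons i ▸ single_le_sum (fun j _ => hst.cons_nonneg i j) (mem_univ j)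

theorem Invariant.psStep (hst : Invariant st) : Invariant (psStep s st) := by
  by_cases h : (available st).Nonempty
  · refine ⟨fun j => ?_, fun i j => ?_, fun j => ?_, fun i => ?_⟩
    · rw [rem_psStep h, sub_nonneg]
      exact numEaters_mul_phaseLength_le h j (hst.rem_nonneg j)
    · exact (hst.cons_nonneg i j).trans (cons_le_cons_psStep i j)
    · simp only [rem_psStep h, cons_psStep h, sum_add_distrib, sum_ite, sum_const_zero,
        add_zero, sum_const, nsmul_eq_mul, hst.rem_eq j, numEaters]
      ring
    · simp only [cons_psStep h, sum_add_distrib, sum_ite_eq, mem_univ, if_true,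
        hst.sum_cons i, time_psStep h]
  · rwa [psStep_of_not_nonempty h]

end Phase

section Run

variable (s : Fin n → (Fin n ≃ Fin n))

def initState (n : ℕ) : PSState n := ⟨fun _ => 1, fun _ _ => 0, 0, fun _ => 1⟩

noncomputable def state (k : ℕ) : PSState n := (psStep s)^[k] (initState n)

theorem state_succ (k : ℕ) : state s (k + 1) = psStep s (state s k) :=
  Function.iterate_succ_apply' _ _ _

theorem psProb_eq_cons_state (i j : Fin n) : psProb s i j = (state s n).cons i j := rfl

theorem invariant_state (k : ℕ) : Invariant (state s k) := by
  induction k with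
  | zero => exact ⟨fun _ => zero_le_one, fun _ _ => le_rfl, fun _ => by simp [state, initState],
      fun _ => by simp [state, initState]⟩
  | succ k ih => exact state_succ s k ▸ ih.psStep

theorem rem_antitone (j : Fin n) : Antitone fun k => (state s k).rem j :=
  antitone_nat_of_succ_le fun k => state_succ s k ▸ rem_psStep_le j

theorem time_monotone : Monotone fun k => (state s k).time :=
  monotone_nat_of_le_succ fun k => state_succ s k ▸ time_le_time_psStep

theorem cons_monotone (i j : Fin n) : Monotone fun k => (state s k).cons i j :=
  monotone_nat_of_le_succ fun k => state_succ s k ▸ cons_le_cons_psStep i j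

theorem cons_sub_time_antitone (i j : Fin n) :
    Antitone fun k => (state s k).cons i j - (state s k).time :=
  antitone_nat_of_succ_le fun k => by
    rw [state_succ]
    linarith [cons_psStep_sub_le (s := s) (st := state s k) i j]

theorem card_available_state_le (k : ℕ) : #(available (state s k)) ≤ n - k := by
  induction k with
  | zero => exact (card_le_univ _).trans_eq (Fintype.card_fin n)
  | succ k ih =>
    rw [state_succ]
    by_cases h : (available (state s k)).Nonempty
    · have := card_lt_card (available_psStep_ssubset s h)
      omega
    · rw [psStep_of_not_nonempty h, not_nonempty_iff_eq_empty.1 h, card_empty]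
      exact Nat.zero_le _

theorem rem_psFinal (j : Fin n) : (psFinal s).rem j = 0 := by
  have hempty : available (state s n) = ∅ :=
    card_eq_zero.1 (by simpa using card_available_state_le s n)
  have hj : j ∉ available (state s n) := by simp [hempty]
  exact le_antisymm (not_lt.1 (mem_available.not.1 hj)) ((invariant_state s n).rem_nonneg j)

noncomputable def exhaustPhase (j : Fin n) : ℕ :=
  Nat.find (⟨n, (rem_psFinal s j).le⟩ : ∃ k, (state s k).rem j ≤ 0)

noncomputable def exhaustTime (j : Fin n) : ℝ :=
  (state s (exhaustPhase s j)).time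

theorem exhaustPhase_le (j : Fin n) : exhaustPhase s j ≤ n :=
  Nat.find_min' _ (rem_psFinal s j).le

theorem mem_available_state {k : ℕ} {j : Fin n} :
    j ∈ available (state s k) ↔ k < exhaustPhase s j := by
  rw [mem_available, exhaustPhase, Nat.lt_find_iff]
  exact ⟨fun h m hm => not_le.2 (h.trans_le (rem_antitone s j hm)), fun h => not_le.1 (h k le_rfl)⟩

theorem rem_state_eq_zero {k : ℕ} {j : Fin n} (hk : exhaustPhase s j ≤ k) :
    (state s k).rem j = 0 :=
  le_antisymm (not_lt.1 fun h => ((mem_available_state s).1 (mem_available.2 h)).not_ge hk)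
    ((invariant_state s k).rem_nonneg j)

theorem cons_state_eq {k : ℕ} {a j : Fin n} (hk : exhaustPhase s j ≤ k) :
    (state s k).cons a j = (state s (exhaustPhase s j)).cons a j := by
  induction k, hk using Nat.le_induction with
  | base => rfl
  | succ k hk ih =>
    rw [state_succ, cons_psStep_of_not_mem fun h => ((mem_available_state s).1 h).not_ge hk, ih]

theorem psProb_eq_cons_exhaustPhase (a j : Fin n) :
    psProb s a j = (state s (exhaustPhase s j)).cons a j :=
  cons_state_eq s (exhaustPhase_le s j)

theorem psProb_nonneg (a j : Fin n) : 0 ≤ psProb s a j :=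
  (invariant_state s n).cons_nonneg a j

theorem sum_psProb (j : Fin n) : ∑ a, psProb s a j = 1 := by
  have := (invariant_state s n).rem_eq j
  rw [rem_state_eq_zero s (exhaustPhase_le s j)] at this
  simp only [psProb_eq_cons_state]
  linarith

theorem psProb_le_exhaustTime (a j : Fin n) : psProb s a j ≤ exhaustTime s j := by
  rw [psProb_eq_cons_exhaustPhase]
  exact (invariant_state s _).cons_le_time a j

theorem one_le_mul_exhaustTime (j : Fin n) : 1 ≤ n * exhaustTime s j :=
  calc 1 = ∑ a, psProb s a j := (sum_psProb s j).symm
    _ ≤ ∑ _a : Fin n, exhaustTime s j := sum_le_sum fun a _ => psProb_le_exhaustTime s a j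
    _ = n * exhaustTime s j := by simp

theorem mul_time_state_eq (k : ℕ) : n * (state s k).time = ∑ j, (1 - (state s k).rem j) := by
  have hst := invariant_state s k
  calc (n : ℝ) * (state s k).time = ∑ i, ∑ j, (state s k).cons i j := by simp [hst.sum_cons]
    _ = ∑ j, ∑ i, (state s k).cons i j := sum_comm
    _ = ∑ j, (1 - (state s k).rem j) := by simp [hst.rem_eq]

theorem rem_state_le_one (k : ℕ) (j : Fin n) : (state s k).rem j ≤ 1 :=
  rem_antitone s j (Nat.zero_le k)

theorem time_state_le_one (hn : 0 < n) (k : ℕ) : (state s k).time ≤ 1 := by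
  have hle : (n : ℝ) * (state s k).time ≤ n * 1 := by
    rw [mul_time_state_eq, mul_one]
    calc ∑ j, (1 - (state s k).rem j) ≤ ∑ _j : Fin n, (1 : ℝ) :=
          sum_le_sum fun j _ => by linarith [(invariant_state s k).rem_nonneg j]
      _ = n := by simp
  exact le_of_mul_le_mul_left hle (by exact_mod_cast hn)

theorem exhaustTime_le_one (j : Fin n) : exhaustTime s j ≤ 1 :=
  time_state_le_one s j.pos _

noncomputable def lastPhaseBefore (T : ℝ) : ℕ :=
  Nat.findGreatest (fun k => (state s k).time ≤ T) n

theorem time_lastPhaseBefore_le {T : ℝ} (hT : 0 ≤ T) : (state s (lastPhaseBefore s T)).time ≤ T :=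
  Nat.findGreatest_spec (P := fun k => (state s k).time ≤ T) (Nat.zero_le n) hT

theorem exhaustPhase_le_lastPhaseBefore {T : ℝ} {j : Fin n} (hj : exhaustTime s j ≤ T) :
    exhaustPhase s j ≤ lastPhaseBefore s T :=
  Nat.le_findGreatest (exhaustPhase_le s j) hj

theorem card_exhaustTime_le {T : ℝ} (hT : 0 ≤ T) :
    (#(univ.filter fun j => exhaustTime s j ≤ T) : ℝ) ≤ n * T := by
  set k := lastPhaseBefore s T
  calc (#(univ.filter fun j => exhaustTime s j ≤ T) : ℝ)
      = ∑ j ∈ univ.filter (fun j => exhaustTime s j ≤ T), (1 - (state s k).rem j) := by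
        rw [sum_congr rfl fun j hj => by
          rw [rem_state_eq_zero s (exhaustPhase_le_lastPhaseBefore s (mem_filter.1 hj).2),
            sub_zero]]
        simp
    _ ≤ ∑ j, (1 - (state s k).rem j) :=
        sum_le_univ_sum_of_nonneg fun j => sub_nonneg.2 (rem_state_le_one s k j)
    _ = n * (state s k).time := (mul_time_state_eq s k).symm
    _ ≤ n * T := mul_le_mul_of_nonneg_left (time_lastPhaseBefore_le s hT) n.cast_nonneg

theorem exhaustTime_sub_le_psProb {a j : Fin n} {T : ℝ} (hT : 0 ≤ T)
    (hpref : ∀ j', (s a).symm j' < (s a).symm j → exhaustTime s j' ≤ T) :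
    exhaustTime s j - T ≤ psProb s a j := by
  set k₀ := lastPhaseBefore s T
  have htime₀ := time_lastPhaseBefore_le s hT
  rcases le_or_gt (exhaustPhase s j) k₀ with hle | hlt
  · have : exhaustTime s j ≤ T := (time_monotone s hle).trans htime₀
    linarith [psProb_nonneg s a j]
  -- from phase `k₀` on, every item `a` prefers to `j` is gone, so `a` eats `j` until it is gone
  have heat : ∀ k, k₀ ≤ k → k ≤ exhaustPhase s j →
      (state s k).time - (state s k₀).time ≤ (state s k).cons a j - (state s k₀).cons a j := by
    intro k hk
    induction k, hk using Nat.le_induction with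
    | base => simp
    | succ k hk ih =>
      intro hkj
      have hj : j ∈ available (state s k) := (mem_available_state s).2 hkj
      have hfav : favorite s (state s k) ⟨j, hj⟩ a = j := favorite_eq _ hj fun j' hj' =>
        le_of_not_gt fun hlt' => ((mem_available_state s).1 hj').not_ge
          ((exhaustPhase_le_lastPhaseBefore s (hpref j' hlt')).trans hk)
      rw [state_succ, cons_psStep_of_favorite _ hfav]
      linarith [ih (Nat.le_of_succ_le hkj)]
  have := heat _ hlt.le le_rfl
  rw [psProb_eq_cons_exhaustPhase, exhaustTime]
  linarith [(invariant_state s k₀).cons_nonneg a j]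

theorem exists_startTime {a j : Fin n} (hpos : 0 < psProb s a j) :
    ∃ σ, 0 ≤ σ ∧ (∀ j', (s a).symm j' < (s a).symm j → exhaustTime s j' ≤ σ) ∧
      psProb s a j ≤ exhaustTime s j - σ := by
  have hex : ∃ k, 0 < (state s (k + 1)).cons a j :=
    ⟨n, hpos.trans_le (cons_monotone s a j n.le_succ)⟩
  set k := Nat.find hex with hk
  have hstart : 0 < (state s (k + 1)).cons a j := Nat.find_spec hex
  have hzero : (state s k).cons a j = 0 := by
    rcases hk' : k with _ | m
    · rfl
    · exact le_antisymm (not_lt.1 (Nat.find_min hex (by omega)))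
        ((invariant_state s _).cons_nonneg a j)
  have hact : (available (state s k)).Nonempty := by
    by_contra hemp
    rw [state_succ, psStep_of_not_nonempty hemp, hzero] at hstart
    exact hstart.false
  have hfav : favorite s (state s k) hact a = j := by
    by_contra hne
    rw [state_succ, cons_psStep hact, if_neg hne, add_zero, hzero] at hstart
    exact hstart.false
  have hkj : k < exhaustPhase s j := (mem_available_state s).1 (hfav ▸ (favorite_spec hact a).1)
  refine ⟨(state s k).time, time_monotone s (Nat.zero_le k), fun j' hj' => ?_, ?_⟩
  · refine time_monotone s (le_of_not_gt fun hlt => hj'.not_ge ?_)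
    exact hfav ▸ (favorite_spec hact a).2 j' ((mem_available_state s).2 hlt)
  · have := cons_sub_time_antitone s a j hkj.le
    rw [psProb_eq_cons_exhaustPhase, exhaustTime]
    simp only at this
    linarith

end Run

theorem two_mul_psProb_le {s q : Fin n → (Fin n ≃ Fin n)} {a j : Fin n} (hsq : s a = q a)
    (hmin : ∀ k, exhaustTime q k < exhaustTime q j → exhaustTime s k ≤ 2 * exhaustTime q k)
    (hj : 2 * exhaustTime q j ≤ exhaustTime s j) : 2 * psProb q a j ≤ psProb s a j := by
  rcases (psProb_nonneg q a j).eq_or_lt with hzero | hpos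
  · rw [← hzero, mul_zero]
    exact psProb_nonneg s a j
  obtain ⟨σ, hσ, hpref, hprob⟩ := exists_startTime q hpos
  have hσj : σ < exhaustTime q j := by linarith
  have : exhaustTime s j - 2 * σ ≤ psProb s a j :=
    exhaustTime_sub_le_psProb s (by positivity) fun j' hj' => by
      have := hpref j' (hsq ▸ hj')
      linarith [hmin j' (this.trans_lt hσj)]
  linarith

theorem exhaustTime_le_two_mul {s q : Fin n → (Fin n ≃ Fin n)} (i : Fin n)
    (hsq : ∀ a, a ≠ i → s a = q a) (j : Fin n) : exhaustTime s j ≤ 2 * exhaustTime q j := by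
  by_contra! hj
  obtain ⟨j, hjbad, hjmin⟩ :=
    exists_min_image (univ.filter fun j => 2 * exhaustTime q j < exhaustTime s j)
      (exhaustTime q) ⟨j, by simpa using hj⟩
  simp only [mem_filter, mem_univ, true_and] at hjbad hjmin
  have hothers : ∀ a ∈ univ.erase i, 2 * psProb q a j ≤ psProb s a j := fun a ha =>
    two_mul_psProb_le (hsq a (ne_of_mem_erase ha))
      (fun k hk => le_of_not_gt fun hbad => (hjmin k hbad).not_gt hk) hjbad.le
  have hhalf : 2 * (1 - psProb q i j) ≤ 1 :=
    calc 2 * (1 - psProb q i j) = ∑ a ∈ univ.erase i, 2 * psProb q a j := by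
          rw [← mul_sum, sum_erase_eq_sub (mem_univ i), sum_psProb]
      _ ≤ ∑ a ∈ univ.erase i, psProb s a j := sum_le_sum hothers
      _ ≤ ∑ a, psProb s a j := sum_le_univ_sum_of_nonneg fun a => psProb_nonneg s a j
      _ = 1 := sum_psProb s j
  linarith [psProb_le_exhaustTime q i j, exhaustTime_le_one s j]

section Welfare

variable {u : Fin n → Fin n → ℝ} {s : Fin n → (Fin n ≃ Fin n)}

noncomputable def utility (u : Fin n → Fin n → ℝ) (s : Fin n → (Fin n ≃ Fin n)) (i : Fin n) : ℝ :=
  ∑ j, psProb s i j * u i j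

theorem psSW_eq_sum_utility : psSW u s = ∑ i, utility u s i := rfl

theorem utility_nonneg {i : Fin n} (hu : ∀ j, 0 ≤ u i j) : 0 ≤ utility u s i :=
  sum_nonneg fun j _ => mul_nonneg (psProb_nonneg s i j) (hu j)

def rankFirst (j : Fin n) : Fin n ≃ Fin n :=
  Equiv.swap ⟨0, j.pos⟩ j

theorem exhaustTime_le_psProb_rankFirst (s : Fin n → (Fin n ≃ Fin n)) (i j : Fin n) :
    exhaustTime (Function.update s i (rankFirst j)) j ≤
      psProb (Function.update s i (rankFirst j)) i j := by
  have := exhaustTime_sub_le_psProb (Function.update s i (rankFirst j)) (a := i) (j := j) le_rfl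
    fun j' hj' => by simp [rankFirst, Fin.lt_def] at hj'
  linarith

theorem exhaustTime_mul_le_utility (hnash : PSNash u s) {i : Fin n} (hu : ∀ j, 0 ≤ u i j)
    (j : Fin n) : exhaustTime (Function.update s i (rankFirst j)) j * u i j ≤ utility u s i := by
  set q := Function.update s i (rankFirst j)
  calc exhaustTime q j * u i j ≤ psProb q i j * u i j :=
        mul_le_mul_of_nonneg_right (exhaustTime_le_psProb_rankFirst s i j) (hu j)
    _ ≤ ∑ j', psProb q i j' * u i j' :=
        single_le_sum (fun j' _ => mul_nonneg (psProb_nonneg q i j') (hu j')) (mem_univ j)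
    _ ≤ utility u s i := hnash i _

theorem mul_exhaustTime_le_utility (hnash : PSNash u s) {i : Fin n} (hu : ∀ j, 0 ≤ u i j)
    (j : Fin n) : u i j * exhaustTime s j ≤ 2 * utility u s i := by
  have := exhaustTime_le_two_mul (q := Function.update s i (rankFirst j)) i
    (fun a ha => (Function.update_of_ne ha _ s).symm) j
  nlinarith [exhaustTime_mul_le_utility hnash hu j, hu j]

theorem le_mul_utility (hnash : PSNash u s) {i : Fin n} (hu : ∀ j, 0 ≤ u i j) (j : Fin n) :
    u i j ≤ n * utility u s i := by
  nlinarith [exhaustTime_mul_le_utility hnash hu j,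
    one_le_mul_exhaustTime (Function.update s i (rankFirst j)) j, hu j]

theorem one_le_psSW (hn : 0 < n) (hu : ∀ i, UnitRange (u i)) (hnash : PSNash u s) :
    1 ≤ psSW u s := by
  have hone : ∀ i, 1 ≤ n * utility u s i := fun i => by
    obtain ⟨j, hj⟩ := (hu i).2.1
    simpa [hj] using le_mul_utility hnash (fun j => ((hu i).1 j).1) j
  have : (n : ℝ) * 1 ≤ n * psSW u s :=
    calc (n : ℝ) * 1 = ∑ _i : Fin n, 1 := by simp
      _ ≤ ∑ i, n * utility u s i := sum_le_sum fun i _ => hone i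
      _ = n * psSW u s := by rw [psSW_eq_sum_utility, mul_sum]
  exact le_of_mul_le_mul_left this (by exact_mod_cast hn)

theorem mul_sum_filter_lt_exhaustTime_le (hnash : PSNash u s) (hu : ∀ i j, 0 ≤ u i j)
    (μ : Equiv.Perm (Fin n)) (t : ℝ) :
    t * ∑ i ∈ univ.filter (fun i => t < exhaustTime s (μ i)), u i (μ i) ≤ 2 * psSW u s := by
  rw [mul_sum, psSW_eq_sum_utility, mul_sum]
  calc ∑ i ∈ univ.filter (fun i => t < exhaustTime s (μ i)), t * u i (μ i)
      ≤ ∑ i ∈ univ.filter (fun i => t < exhaustTime s (μ i)), 2 * utility u s i :=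
        sum_le_sum fun i hi => by
          nlinarith [mul_exhaustTime_le_utility hnash (hu i) (μ i), (mem_filter.1 hi).2, hu i (μ i)]
    _ ≤ ∑ i, 2 * utility u s i :=
        sum_le_univ_sum_of_nonneg fun i => mul_nonneg zero_le_two (utility_nonneg (hu i))

theorem sum_filter_exhaustTime_le_le (hu : ∀ i j, u i j ≤ 1) (s : Fin n → (Fin n ≃ Fin n))
    (μ : Equiv.Perm (Fin n)) {t : ℝ} (ht : 0 ≤ t) :
    ∑ i ∈ univ.filter (fun i => exhaustTime s (μ i) ≤ t), u i (μ i) ≤ n * t :=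
  calc _ ≤ (#(univ.filter fun i => exhaustTime s (μ i) ≤ t) : ℝ) := by
        simpa using sum_le_card_nsmul _ _ 1 fun i _ => hu i (μ i)
    _ ≤ #(univ.filter fun j => exhaustTime s j ≤ t) := by
        exact_mod_cast card_le_card_of_injOn μ (fun i hi => by simpa using hi) μ.injective.injOn
    _ ≤ n * t := card_exhaustTime_le s ht

theorem sum_matching_le (hn : 0 < n) (hu : ∀ i, UnitRange (u i)) (hnash : PSNash u s)
    (μ : Equiv.Perm (Fin n)) : ∑ i, u i (μ i) ≤ 3 * √n * psSW u s := by
  have hsqrt : 0 < √(n : ℝ) := Real.sqrt_pos.2 (by exact_mod_cast hn)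
  set t := (√(n : ℝ))⁻¹ with ht
  have hlate := mul_sum_filter_lt_exhaustTime_le hnash (fun i j => ((hu i).1 j).1) μ t
  have hnt : (n : ℝ) * t = √n := by rw [ht, ← div_eq_mul_inv, Real.div_sqrt]
  have hearly := (sum_filter_exhaustTime_le_le (fun i j => ((hu i).1 j).2) s μ
    (by positivity : 0 ≤ t)).trans_eq hnt
  have hsw := mul_le_mul_of_nonneg_left (one_le_psSW hn hu hnash) hsqrt.le
  rw [← sum_filter_add_sum_filter_not univ fun i => exhaustTime s (μ i) ≤ t]
  simp only [not_le]
  have hlate' : ∑ i ∈ univ.filter (fun i => t < exhaustTime s (μ i)), u i (μ i) ≤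
      2 * √n * psSW u s := by
    calc _ = √n * (t * ∑ i ∈ univ.filter (fun i => t < exhaustTime s (μ i)), u i (μ i)) := by
          rw [ht, ← mul_assoc, mul_inv_cancel₀ hsqrt.ne', one_mul]
      _ ≤ √n * (2 * psSW u s) := mul_le_mul_of_nonneg_left hlate hsqrt.le
      _ = 2 * √n * psSW u s := by ring
  linarith

end Welfare

end ProbabilisticSerial

/-- Under the unit-range representation, the pure Price of Anarchy of
Probabilistic Serial is `O(√n)`: there is a universal constant `C > 0` such that
for every `n`, every profile `u` of unit-range valuations and every pure Nash
equilibrium `s` of Probabilistic Serial at `u`,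
`SW_OPT(u) ≤ C · √n · SW_PS(u, s)`. -/
theorem ps_pure_poa_sqrt_n_unit_range :
    ∃ C : ℝ, 0 < C ∧
      ∀ (n : ℕ) (u : Fin n → Fin n → ℝ) (s : Fin n → (Fin n ≃ Fin n)),
        (∀ i, UnitRange (u i)) → PSNash u s →
        SWopt u ≤ C * Real.sqrt n * psSW u s := by
  refine ⟨3, by norm_num, fun n u s hu hnash => ?_⟩
  rcases n.eq_zero_or_pos with rfl | hn
  · simp [SWopt, psSW]
  · exact Finset.sup'_le _ _ fun μ _ => ProbabilisticSerial.sum_matching_le hn hu hnash μ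
end
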